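/- arXiv:2109.10249 — 13 statements merged into one kernel-verified Lean document; each statement's English description precedes it below -/
import Mathlib

section
/- For every infinite set X of positive integers and every odd prime p, there exists an infinite subset Z = {z_1 < z_2 < ...} of X such that, writing each difference z_j - z_i (for i < j) as p^a * b with p not dividing b, the following hold: (1) there is a fixed residue y ∈ {1,...,p-1} with b ≡ y (mod p) for all i < j; (2) the p-adic valuation of z_j - z_i equals the p-adic valuation of z_k - z_l if and only if i = l (for i < j and l < k); and (3) the valuations of consecutive differences strictly increase: v_p(z_{i+1} - z_i) < v_p(z_{i+2} - z_{i+1}) for all i. -/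
section Aux

variable {p : ℕ}

lemma pigeonNat {S : Set ℕ} (hS : S.Infinite) (f : ℕ → ℕ) (N : ℕ)
    (hf : ∀ s ∈ S, f s < N) : ∃ c, {s ∈ S | f s = c}.Infinite := by
  by_contra h
  push_neg at h
  apply hS
  have hsub : S ⊆ ⋃ c ∈ Finset.range N, {s ∈ S | f s = c} := by
    intro s hs
    simp only [Set.mem_iUnion]
    exact ⟨f s, by simpa using hf s hs, hs, rfl⟩
  exact ((Finset.range N).finite_toSet.biUnion (fun c _ => h c)).subset hsub

lemma exists_residues (hp : 1 < p) {S : Set ℕ} (hS : S.Infinite) :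
    ∃ r : ℕ → ℕ, r 0 = 0 ∧ (∀ k, r (k + 1) % p ^ k = r k) ∧
      ∀ k, {s ∈ S | s % p ^ k = r k}.Infinite := by
  have step : ∀ k c, {s ∈ S | s % p ^ k = c}.Infinite →
      ∃ c', c' % p ^ k = c ∧ {s ∈ S | s % p ^ (k + 1) = c'}.Infinite := by
    intro k c hc
    obtain ⟨c', hc'⟩ := pigeonNat hc (· % p ^ (k + 1)) (p ^ (k + 1))
      (fun s _ => Nat.mod_lt _ (pow_pos (by omega) _))
    obtain ⟨s, ⟨⟨hsS, hsk⟩, hsk1⟩⟩ := hc'.nonempty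
    refine ⟨c', ?_, ?_⟩
    · rw [← hsk1, Nat.mod_mod_of_dvd _ (pow_dvd_pow p (Nat.le_succ k)), hsk]
    · apply hc'.mono
      intro t ht
      exact ⟨ht.1.1, ht.2⟩
  let F : ∀ _ : ℕ, {c : ℕ // {s ∈ S | s % p ^ 0 = c}.Infinite ∨ True} := fun _ => ⟨0, Or.inr trivial⟩
  clear F
  let G : ∀ k : ℕ, {c : ℕ // {s ∈ S | s % p ^ k = c}.Infinite} := fun k =>
    Nat.rec ⟨0, hS.mono (fun s hs => ⟨hs, Nat.mod_one s⟩)⟩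
      (fun k ih => ⟨(step k ih.1 ih.2).choose, (step k ih.1 ih.2).choose_spec.2⟩) k
  refine ⟨fun k => (G k).1, rfl, fun k => ?_, fun k => (G k).2⟩
  exact (step k (G k).1 (G k).2).choose_spec.1

lemma div_pow_mod {u a : ℕ} (hp : 0 < p) (h : p ^ a ∣ u) :
    (u / p ^ a) % p = u % p ^ (a + 1) / p ^ a := by
  obtain ⟨q, rfl⟩ := h
  rw [pow_succ, Nat.mul_mod_mul_left, Nat.mul_div_cancel_left _ (pow_pos hp a),
    Nat.mul_div_cancel_left _ (pow_pos hp a)]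

lemma sub_mod_eq {x y z n : ℕ} (hzx : z ≤ x) (hzy : z ≤ y) (h : x % n = y % n) :
    (x - z) % n = (y - z) % n := by
  have h' : (x - z) + z ≡ (y - z) + z [MOD n] := by
    rwa [Nat.sub_add_cancel hzx, Nat.sub_add_cancel hzy]
  exact Nat.ModEq.add_right_cancel' z h'

lemma y_pos (hp : p.Prime) {u a : ℕ} (hu : u ≠ 0) (hv : padicValNat p u = a) :
    (u / p ^ a) % p ≠ 0 := by
  haveI : Fact p.Prime := ⟨hp⟩
  intro h0
  have hd : p ∣ u / p ^ a := Nat.dvd_of_mod_eq_zero h0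
  have hpa : p ^ a ∣ u := hv ▸ pow_padicValNat_dvd
  have hsucc : p ^ (a + 1) ∣ u := by
    obtain ⟨q, rfl⟩ := hpa
    rw [Nat.mul_div_cancel_left _ (pow_pos hp.pos a)] at hd
    obtain ⟨q', rfl⟩ := hd
    exact ⟨q', by rw [pow_succ]; ring⟩
  have hnot := pow_succ_padicValNat_not_dvd (p := p) hu
  rw [hv] at hnot
  exact hnot hsucc

lemma step_main (hp : p.Prime) {S : Set ℕ} (hS : S.Infinite) :
    ∃ (z : ℕ) (a : ℕ) (T : Set ℕ), z ∈ S ∧ T ⊆ S ∧ T.Infinite ∧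
      (∃ c, ∀ t ∈ T, t % p ^ (a + 1) = c) ∧
      ∀ t ∈ T, z < t ∧ padicValNat p (t - z) = a := by
  haveI : Fact p.Prime := ⟨hp⟩
  obtain ⟨r, hr0, hr1, hr2⟩ := exists_residues hp.one_lt hS
  have h2 : ∃ z ∈ S, ∃ k, z % p ^ k ≠ r k := by
    by_contra h
    push_neg at h
    obtain ⟨z1, hz1, z2, hz2, hne⟩ := hS.nontrivial
    set K := max z1 z2 + 1 with hK
    have hK1 : z1 < p ^ K := lt_of_lt_of_le (by omega) (Nat.le_of_lt (Nat.lt_pow_self (n := K) hp.one_lt))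
    have hK2 : z2 < p ^ K := lt_of_lt_of_le (by omega) (Nat.le_of_lt (Nat.lt_pow_self (n := K) hp.one_lt))
    have e1 := h z1 hz1 K
    have e2 := h z2 hz2 K
    rw [Nat.mod_eq_of_lt hK1] at e1
    rw [Nat.mod_eq_of_lt hK2] at e2
    exact hne (e1.trans e2.symm)
  obtain ⟨z, hzS, hk⟩ := h2
  have ha'pos : 0 < Nat.find hk := by
    by_contra hcon
    have h0 : Nat.find hk = 0 := by omega
    have hsp := Nat.find_spec hk
    rw [h0] at hsp
    exact hsp (by rw [hr0, pow_zero]; exact Nat.mod_one z)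
  set a := Nat.find hk - 1 with ha
  have haa : a + 1 = Nat.find hk := by omega
  have hza : z % p ^ a = r a := by
    by_contra hcon
    exact Nat.find_min hk (by omega : a < Nat.find hk) hcon
  have hza1 : z % p ^ (a + 1) ≠ r (a + 1) := by
    rw [haa]
    exact Nat.find_spec hk
  refine ⟨z, a, {s ∈ S | s % p ^ (a + 1) = r (a + 1) ∧ z < s}, hzS, fun t ht => ht.1, ?_,
    ⟨r (a + 1), fun t ht => ht.2.1⟩, ?_⟩
  · have heq : {s ∈ S | s % p ^ (a + 1) = r (a + 1) ∧ z < s} =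
        {s ∈ S | s % p ^ (a + 1) = r (a + 1)} \ {s | s ≤ z} := by
      ext s
      simp only [Set.mem_setOf_eq, Set.mem_diff]
      constructor
      · rintro ⟨h1, h2, h3⟩
        exact ⟨⟨h1, h2⟩, fun hmem => by have h4 : s ≤ z := hmem; omega⟩
      · rintro ⟨⟨h1, h2⟩, h3⟩
        refine ⟨h1, h2, ?_⟩
        by_contra hcon
        exact h3 (show s ≤ z by omega)
    rw [heq]
    exact (hr2 (a + 1)).diff (Set.finite_le_nat z)
  · rintro t ⟨htS, htr, htz⟩
    refine ⟨htz, ?_⟩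
    have hmod : z % p ^ a = t % p ^ a := by
      rw [hza, ← hr1 a, ← htr, Nat.mod_mod_of_dvd _ (pow_dvd_pow p (Nat.le_succ a))]
    have h1 : p ^ a ∣ t - z := (Nat.modEq_iff_dvd' htz.le).mp hmod
    have h2 : ¬ p ^ (a + 1) ∣ t - z := by
      intro hd
      apply hza1
      have hmz : z ≡ t [MOD p ^ (a + 1)] := (Nat.modEq_iff_dvd' htz.le).mpr hd
      rw [Nat.ModEq] at hmz
      rw [hmz, htr]
    have hne : t - z ≠ 0 := by omega
    have hle : a ≤ padicValNat p (t - z) := (padicValNat_dvd_iff_le hne).mp h1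
    have hlt : ¬ (a + 1 ≤ padicValNat p (t - z)) := fun hc =>
      h2 ((padicValNat_dvd_iff_le hne).mpr hc)
    omega

end Aux

theorem stmt_0 (X : Set ℕ) (hX : X.Infinite) (hpos : ∀ x ∈ X, 0 < x)
    (p : ℕ) (hp : p.Prime) (hodd : Odd p) :
    ∃ z : ℕ → ℕ, StrictMono z ∧ (∀ n, z n ∈ X) ∧
      (∃ y, 1 ≤ y ∧ y ≤ p - 1 ∧
        ∀ i j, i < j → ((z j - z i) / p ^ padicValNat p (z j - z i)) % p = y) ∧
      (∀ i j l m, i < j → l < m →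
        (padicValNat p (z j - z i) = padicValNat p (z m - z l) ↔ i = l)) ∧
      (∀ i, padicValNat p (z (i + 1) - z i) < padicValNat p (z (i + 2) - z (i + 1))) := by
  haveI : Fact p.Prime := ⟨hp⟩
  have H : ∀ S : Set ℕ, S.Infinite → ∃ (z : ℕ) (a : ℕ) (T : Set ℕ), z ∈ S ∧ T ⊆ S ∧
      T.Infinite ∧ (∃ c, ∀ t ∈ T, t % p ^ (a + 1) = c) ∧
      ∀ t ∈ T, z < t ∧ padicValNat p (t - z) = a := fun S hS => step_main hp hS
  choose z0 a0 T0 hmem hsub hinf hc hstep using H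
  let C : ℕ → {S : Set ℕ // S.Infinite} := fun n =>
    Nat.rec ⟨X, hX⟩ (fun _ ih => ⟨T0 ih.1 ih.2, hinf ih.1 ih.2⟩) n
  set Z : ℕ → ℕ := fun n => z0 (C n).1 (C n).2 with hZ
  set A : ℕ → ℕ := fun n => a0 (C n).1 (C n).2 with hA
  have hCsucc : ∀ n, (C (n + 1)).1 = T0 (C n).1 (C n).2 := fun n => rfl
  have hCsub : ∀ n, (C (n + 1)).1 ⊆ (C n).1 := fun n => by
    rw [hCsucc]; exact hsub _ _
  have hCchain : ∀ i j, i ≤ j → (C j).1 ⊆ (C i).1 := by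
    intro i j hij
    induction j, hij using Nat.le_induction with
    | base => exact subset_rfl
    | succ j hij ih => exact (hCsub j).trans ih
  have hZmem : ∀ n, Z n ∈ (C n).1 := fun n => hmem _ _
  have hZT : ∀ i j, i < j → Z j ∈ T0 (C i).1 (C i).2 := by
    intro i j hij
    have := hCchain (i + 1) j hij (hZmem j)
    rwa [hCsucc] at this
  have hkey : ∀ i j, i < j → Z i < Z j ∧ padicValNat p (Z j - Z i) = A i :=
    fun i j hij => hstep (C i).1 (C i).2 _ (hZT i j hij)
  have hZmono : StrictMono Z := strictMono_nat_of_lt_succ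
    (fun n => (hkey n (n + 1) (Nat.lt_succ_self n)).1)
  have hres : ∀ i j, i < j →
      ((Z j - Z i) / p ^ (A i)) % p = ((Z (i + 1) - Z i) / p ^ (A i)) % p := by
    intro i j hij
    obtain ⟨c, hc'⟩ := hc (C i).1 (C i).2
    have h1 := hc' _ (hZT i j hij)
    have h2 := hc' _ (hZT i (i + 1) (Nat.lt_succ_self i))
    have hlt1 := (hkey i j hij).1
    have hlt2 := (hkey i (i + 1) (Nat.lt_succ_self i)).1
    have hd1 : p ^ A i ∣ Z j - Z i := (hkey i j hij).2 ▸ pow_padicValNat_dvd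
    have hd2 : p ^ A i ∣ Z (i + 1) - Z i :=
      (hkey i (i + 1) (Nat.lt_succ_self i)).2 ▸ pow_padicValNat_dvd
    rw [div_pow_mod hp.pos hd1, div_pow_mod hp.pos hd2,
      sub_mod_eq hlt1.le hlt2.le (h1.trans h2.symm)]
  set Y : ℕ → ℕ := fun i => ((Z (i + 1) - Z i) / p ^ (A i)) % p with hYdef
  have hYlt : ∀ i, Y i < p := fun i => Nat.mod_lt _ hp.pos
  have hYpos : ∀ i, Y i ≠ 0 := by
    intro i
    have h1 := (hkey i (i + 1) (Nat.lt_succ_self i)).1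
    exact y_pos hp (by omega) ((hkey i (i + 1) (Nat.lt_succ_self i)).2)
  have hAlt : ∀ i, A i < A (i + 1) := by
    intro i
    obtain ⟨c, hc'⟩ := hc (C i).1 (C i).2
    have h1 := hc' _ (hZT i (i + 1) (Nat.lt_succ_self i))
    have h2 := hc' _ (hZT i (i + 2) (by omega))
    have hlt := (hkey (i + 1) (i + 2) (Nat.lt_succ_self _)).1
    have hd : p ^ (A i + 1) ∣ Z (i + 2) - Z (i + 1) :=
      (Nat.modEq_iff_dvd' hlt.le).mp (h1.trans h2.symm)
    have hv := (hkey (i + 1) (i + 2) (Nat.lt_succ_self _)).2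
    have hne : Z (i + 2) - Z (i + 1) ≠ 0 := by omega
    have := (padicValNat_dvd_iff_le hne).mp hd
    omega
  have hAmono : StrictMono A := strictMono_nat_of_lt_succ hAlt
  obtain ⟨y, hy⟩ := pigeonNat (Set.infinite_univ : (Set.univ : Set ℕ).Infinite) Y p
    (fun s _ => hYlt s)
  have hy' : {n | Y n = y}.Infinite := by
    apply hy.mono
    intro n hn
    exact hn.2
  set φ : ℕ → ℕ := Nat.nth (fun n => Y n = y) with hφ
  have hφmono : StrictMono φ := Nat.nth_strictMono hy'
  have hφmem : ∀ n, Y (φ n) = y := fun n => Nat.nth_mem_of_infinite hy' n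
  refine ⟨fun n => Z (φ n), hZmono.comp hφmono,
    fun n => hCchain 0 (φ n) (Nat.zero_le _) (hZmem (φ n)), ⟨y, ?_, ?_, ?_⟩, ?_, ?_⟩
  · have := hYpos (φ 0)
    have h0 := hφmem 0
    omega
  · have := hYlt (φ 0)
    have h0 := hφmem 0
    omega
  · intro i j hij
    have h2 := (hkey (φ i) (φ j) (hφmono hij)).2
    rw [h2, hres (φ i) (φ j) (hφmono hij)]
    exact hφmem i
  · intro i j l m hij hlm
    rw [(hkey _ _ (hφmono hij)).2, (hkey _ _ (hφmono hlm)).2]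
    constructor
    · intro h
      exact hφmono.injective (hAmono.injective h)
    · intro h
      rw [h]
  · intro i
    rw [(hkey _ _ (hφmono (Nat.lt_succ_self i))).2,
      (hkey _ _ (hφmono (Nat.lt_succ_self (i + 1)))).2]
    exact hAmono (hφmono (Nat.lt_succ_self i))
end

section
/- Let p be an odd prime and let y_1 < y_2 < ... be positive integers such that all differences y_j - y_i (i < j) have p-free part congruent to a fixed residue y'' ∈ {1,...,p-1} modulo p, and such that v_p(y_j - y_i) depends only on i (i.e., v_p(y_j - y_i) = v_p(y_k - y_i) for all i < j < k). Then among any p+1 indices i_1 < i_2 < ... < i_{p+1}, the common valuations c_{i_1}, ..., c_{i_p} (where c_i = v_p(y_j - y_i) for j > i) cannot all be equal. -/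
lemma tele_aux (f : ℕ → ℕ) : ∀ n, (∀ a, 1 ≤ a → a ≤ n → f a ≤ f (a + 1)) →
    f 1 ≤ f (n + 1) ∧ ∑ a ∈ Finset.Icc 1 n, (f (a + 1) - f a) = f (n + 1) - f 1 := by
  intro n
  induction n with
  | zero => intro _; simp
  | succ n ih =>
    intro h
    obtain ⟨h1, h2⟩ := ih (fun a ha hb => h a ha (by omega))
    have h3 := h (n + 1) (by omega) (by omega)
    rw [Finset.sum_Icc_succ_top (by omega), h2]
    exact ⟨by omega, by omega⟩

theorem stmt_1 (p : ℕ) (hp : p.Prime) (hodd : Odd p)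
    (y : ℕ → ℕ) (hmono : StrictMono y) (hpos : ∀ n, 0 < y n)
    (y'' : ℕ) (hy''1 : 1 ≤ y'') (hy''2 : y'' ≤ p - 1)
    (hres : ∀ i j, i < j → ((y j - y i) / p ^ padicValNat p (y j - y i)) % p = y'')
    (hval : ∀ i j k, i < j → j < k →
      padicValNat p (y j - y i) = padicValNat p (y k - y i)) :
    ∀ idx : ℕ → ℕ, StrictMonoOn idx (Set.Icc 1 (p + 1)) →
      ¬ ∃ β, ∀ a ∈ Finset.Icc 1 p,
          padicValNat p (y (idx (a + 1)) - y (idx a)) = β := by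
  haveI hfact : Fact p.Prime := ⟨hp⟩
  have hp1 : 1 < p := hp.one_lt
  intro idx hidx h
  obtain ⟨β, hβ⟩ := h
  have hlt : ∀ a, 1 ≤ a → a ≤ p → idx a < idx (a + 1) := fun a h1 h2 =>
    hidx ⟨h1, by omega⟩ ⟨by omega, by omega⟩ (by omega)
  have hylt : ∀ a, 1 ≤ a → a ≤ p → y (idx a) < y (idx (a + 1)) :=
    fun a h1 h2 => hmono (hlt a h1 h2)
  set m : ℕ → ℕ := fun a => (y (idx (a + 1)) - y (idx a)) / p ^ β with hm
  have hD : ∀ a ∈ Finset.Icc 1 p, y (idx (a + 1)) - y (idx a) = p ^ β * m a := by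
    intro a ha
    have hdvd : p ^ β ∣ y (idx (a + 1)) - y (idx a) := by
      rw [← hβ a ha]; exact pow_padicValNat_dvd
    exact (Nat.mul_div_cancel' hdvd).symm
  have hmres : ∀ a ∈ Finset.Icc 1 p, m a % p = y'' := by
    intro a ha
    simp only [Finset.mem_Icc] at ha
    have := hres (idx a) (idx (a + 1)) (hlt a ha.1 ha.2)
    rwa [hβ a (Finset.mem_Icc.mpr ha)] at this
  have htele := tele_aux (fun a => y (idx a)) p (fun a h1 h2 => (hylt a h1 h2).le)
  have hsum : y (idx (p + 1)) - y (idx 1) = p ^ β * ∑ a ∈ Finset.Icc 1 p, m a := by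
    rw [← htele.2, Finset.sum_congr rfl hD, Finset.mul_sum]
  have hmodsum : (∑ a ∈ Finset.Icc 1 p, m a) % p = 0 := by
    rw [Finset.sum_nat_mod, Finset.sum_congr rfl hmres, Finset.sum_const,
      Nat.card_Icc, Nat.add_sub_cancel, smul_eq_mul, Nat.mul_mod_right]
  have hdvd2 : p ^ (β + 1) ∣ y (idx (p + 1)) - y (idx 1) := by
    rw [hsum, pow_succ]
    exact Nat.mul_dvd_mul dvd_rfl (Nat.dvd_of_mod_eq_zero hmodsum)
  have hne : y (idx (p + 1)) - y (idx 1) ≠ 0 := by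
    have : idx 1 < idx (p + 1) := hidx ⟨le_refl 1, by omega⟩ ⟨by omega, le_refl _⟩ (by omega)
    have := hmono this
    omega
  have h12 : idx 1 < idx 2 := hlt 1 (le_refl 1) (by omega)
  have h2p : idx 2 < idx (p + 1) := hidx ⟨by omega, by omega⟩ ⟨by omega, le_refl _⟩ (by omega)
  have hv : padicValNat p (y (idx (p + 1)) - y (idx 1)) = β := by
    rw [← hval (idx 1) (idx 2) (idx (p + 1)) h12 h2p]
    exact hβ 1 (Finset.mem_Icc.mpr ⟨le_refl 1, by omega⟩)
  have hnd := pow_succ_padicValNat_not_dvd (p := p) hne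
  rw [hv] at hnd
  exact hnd hdvd2
end

section
/- Define Δ: ℕ → {0,1,2,3,4} by Δ(1) = 0 and, for x ≥ 2, Δ(x) ≡ i (mod 5) where x lies in the interval [⌈√2^i⌉, ⌈√2^{i+1}⌉ - 1]. Then for every infinite increasing sequence x_1 < x_2 < ... of positive integers, there exist indices 1 < ℓ with x_ℓ sufficiently large such that Δ(-x_1 + 2x_ℓ) ≠ Δ(x_ℓ). Consequently, there is a 5-coloring of ℕ for which no infinite sequence of pairwise distinct positive integers x_1 < x_2 < ... satisfies that all values x_i and -x_1 + 2x_ℓ (ℓ ≥ 2) are monochromatic. -/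
theorem stmt_3 :
    ∃ Δ : ℕ → Fin 5, Δ 1 = 0 ∧
      (∀ x : ℕ, 2 ≤ x → ∀ i : ℕ,
        (⌈(Real.sqrt 2) ^ i⌉₊ ≤ x ∧ x ≤ ⌈(Real.sqrt 2) ^ (i + 1)⌉₊ - 1) →
        (Δ x : ℕ) = i % 5) ∧
      ∀ x : ℕ → ℕ, StrictMono x → (∀ n, 0 < x n) →
        ∃ ℓ, 2 ≤ ℓ ∧ Δ (2 * x ℓ - x 1) ≠ Δ (x ℓ) := by
  refine ⟨fun x => ⟨Nat.log 2 (x ^ 2) % 5, Nat.mod_lt _ (by norm_num)⟩, ?_, ?_, ?_⟩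
  · simp
  · rintro x hx i ⟨h1, h2⟩
    have hsq : (Real.sqrt 2) ^ 2 = 2 := Real.sq_sqrt (by norm_num)
    -- lower bound: 2^i ≤ x^2
    have hle : (Real.sqrt 2) ^ i ≤ (x : ℝ) :=
      le_trans (Nat.le_ceil _) (by exact_mod_cast h1)
    have hlow : (2 : ℕ) ^ i ≤ x ^ 2 := by
      have : (2 : ℝ) ^ i ≤ (x : ℝ) ^ 2 := by
        calc (2 : ℝ) ^ i = ((Real.sqrt 2) ^ i) ^ 2 := by
              rw [← pow_mul, mul_comm, pow_mul, hsq]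
          _ ≤ (x : ℝ) ^ 2 := by
              apply pow_le_pow_left₀ (by positivity) hle
      exact_mod_cast this
    -- upper bound: x^2 < 2^(i+1)
    have hceil : 1 ≤ ⌈(Real.sqrt 2) ^ (i + 1)⌉₊ := by
      rcases Nat.eq_zero_or_pos ⌈(Real.sqrt 2) ^ (i + 1)⌉₊ with h | h
      · omega
      · exact h
    have hxlt : x < ⌈(Real.sqrt 2) ^ (i + 1)⌉₊ := by omega
    have hlt : (x : ℝ) < (Real.sqrt 2) ^ (i + 1) := by
      by_contra hc
      push_neg at hc
      exact absurd (Nat.ceil_le.mpr hc) (by omega)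
    have hhigh : x ^ 2 < (2 : ℕ) ^ (i + 1) := by
      have : (x : ℝ) ^ 2 < (2 : ℝ) ^ (i + 1) := by
        calc (x : ℝ) ^ 2 < ((Real.sqrt 2) ^ (i + 1)) ^ 2 := by
              apply pow_lt_pow_left₀ hlt (by positivity) (by norm_num)
          _ = (2 : ℝ) ^ (i + 1) := by rw [← pow_mul, mul_comm, pow_mul, hsq]
      exact_mod_cast this
    have hx2 : x ^ 2 ≠ 0 := pow_ne_zero _ (by omega)
    have hli : i ≤ Nat.log 2 (x ^ 2) := (Nat.le_log_iff_pow_le (by norm_num) hx2).mpr hlow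
    have hui : Nat.log 2 (x ^ 2) < i + 1 := Nat.log_lt_of_lt_pow hx2 hhigh
    simp only
    omega
  · intro x hx hpos
    set a := x 1 with ha
    have ha1 : 1 ≤ a := hpos 1
    refine ⟨2 * a + 2, by omega, ?_⟩
    set y := x (2 * a + 2) with hy
    have hylb : 2 * a + 2 ≤ y := hx.le_apply
    set z := 2 * y - a with hz
    have hza : z + a = 2 * y := by omega
    set i := Nat.log 2 (y ^ 2) with hi
    have hy0 : y ^ 2 ≠ 0 := pow_ne_zero _ (by omega)
    have h1 : 2 ^ i ≤ y ^ 2 := Nat.pow_log_le_self 2 hy0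
    have h2 : y ^ 2 < 2 ^ (i + 1) := Nat.lt_pow_succ_log_self (by norm_num) _
    have hz2lb : 2 ^ (i + 1) ≤ z ^ 2 := by
      have : 2 * y ^ 2 ≤ z ^ 2 := by nlinarith
      calc 2 ^ (i + 1) = 2 * 2 ^ i := by ring
        _ ≤ 2 * y ^ 2 := by omega
        _ ≤ z ^ 2 := this
    have hz2ub : z ^ 2 < 2 ^ (i + 3) := by
      have hzlt : z < 2 * y := by omega
      have : z ^ 2 < 4 * y ^ 2 := by nlinarith
      calc z ^ 2 < 4 * y ^ 2 := this
        _ < 4 * 2 ^ (i + 1) := by omega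
        _ = 2 ^ (i + 3) := by ring
    set j := Nat.log 2 (z ^ 2) with hj
    have hz0 : z ^ 2 ≠ 0 := pow_ne_zero _ (by omega)
    have hjlb : i + 1 ≤ j :=
      (Nat.le_log_iff_pow_le (by norm_num) hz0).mpr hz2lb
    have hjub : j < i + 3 := Nat.log_lt_of_lt_pow hz0 hz2ub
    intro hcon
    have : j % 5 = i % 5 := congrArg Fin.val hcon
    omega
end

section
/- Let k ≥ 2 and let x_1 < x_2 < ... < x_m be positive integers with m ≥ 3k such that x_{3k} ∈ [k^ℓ, k^{ℓ+1} - 1] and x_1 + ... + x_{k+2} < k^ℓ. For j = 1, 2, 3 let y_j = x_j + x_{j+1} + ... + x_{j+k-2} + x_{3k} (a sum of k terms). Then each y_j lies in [k^ℓ + 1, k^{ℓ+2} - 1], and hence under the coloring Δ_1(x) = i iff x ∈ [k^i, k^{i+1} - 1], at least two of y_1, y_2, y_3 receive the same color. -/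
theorem stmt_4 (k : ℕ) (hk : 2 ≤ k) (ℓ : ℕ) (x : ℕ → ℕ)
    (hpos : ∀ n, 0 < x n) (hmono : StrictMono x)
    (hx3k : k ^ ℓ ≤ x (3 * k) ∧ x (3 * k) ≤ k ^ (ℓ + 1) - 1)
    (hsmall : ∑ i ∈ Finset.Icc 1 (k + 2), x i < k ^ ℓ)
    (Δ₁ : ℕ → ℕ) (hΔ : ∀ n i : ℕ, k ^ i ≤ n → n ≤ k ^ (i + 1) - 1 → Δ₁ n = i) :
    (∀ j ∈ Finset.Icc 1 3,
        k ^ ℓ + 1 ≤ (∑ i ∈ Finset.Icc j (j + k - 2), x i) + x (3 * k) ∧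
        (∑ i ∈ Finset.Icc j (j + k - 2), x i) + x (3 * k) ≤ k ^ (ℓ + 2) - 1) ∧
    ∃ j₁ ∈ Finset.Icc 1 3, ∃ j₂ ∈ Finset.Icc 1 3, j₁ ≠ j₂ ∧
      Δ₁ ((∑ i ∈ Finset.Icc j₁ (j₁ + k - 2), x i) + x (3 * k)) =
        Δ₁ ((∑ i ∈ Finset.Icc j₂ (j₂ + k - 2), x i) + x (3 * k)) := by
  have hpow : k ^ ℓ + k ^ (ℓ + 1) ≤ k ^ (ℓ + 2) := by
    have : k ^ ℓ * 1 + k ^ ℓ * k ≤ k ^ ℓ * (k * k) := by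
      have h1 : 1 + k ≤ k * k := by nlinarith
      nlinarith [pow_pos (by omega : 0 < k) ℓ]
    calc k ^ ℓ + k ^ (ℓ + 1) = k ^ ℓ * 1 + k ^ ℓ * k := by ring
      _ ≤ k ^ ℓ * (k * k) := this
      _ = k ^ (ℓ + 2) := by ring
  have hp1 : 1 ≤ k ^ ℓ := Nat.one_le_pow _ _ (by omega)
  have hp2 : 1 ≤ k ^ (ℓ + 1) := Nat.one_le_pow _ _ (by omega)
  have key : ∀ j ∈ Finset.Icc 1 3,
      k ^ ℓ + 1 ≤ (∑ i ∈ Finset.Icc j (j + k - 2), x i) + x (3 * k) ∧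
      (∑ i ∈ Finset.Icc j (j + k - 2), x i) + x (3 * k) ≤ k ^ (ℓ + 2) - 1 := by
    intro j hj
    simp only [Finset.mem_Icc] at hj
    have hlow : 1 ≤ ∑ i ∈ Finset.Icc j (j + k - 2), x i := by
      have hmem : j ∈ Finset.Icc j (j + k - 2) := by
        simp only [Finset.mem_Icc]; omega
      calc 1 ≤ x j := hpos j
        _ ≤ _ := Finset.single_le_sum (fun i _ => Nat.zero_le _) hmem
    have hsub : Finset.Icc j (j + k - 2) ⊆ Finset.Icc 1 (k + 2) := by
      intro i hi
      simp only [Finset.mem_Icc] at hi ⊢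
      omega
    have hup : ∑ i ∈ Finset.Icc j (j + k - 2), x i ≤ k ^ ℓ - 1 := by
      have := Finset.sum_le_sum_of_subset hsub (f := x)
      omega
    constructor
    · omega
    · have := hx3k.2
      omega
  refine ⟨key, ?_⟩
  have hcol : ∀ j ∈ Finset.Icc 1 3,
      Δ₁ ((∑ i ∈ Finset.Icc j (j + k - 2), x i) + x (3 * k)) = ℓ ∨
      Δ₁ ((∑ i ∈ Finset.Icc j (j + k - 2), x i) + x (3 * k)) = ℓ + 1 := by
    intro j hj
    obtain ⟨h1, h2⟩ := key j hj
    by_cases hc : (∑ i ∈ Finset.Icc j (j + k - 2), x i) + x (3 * k) ≤ k ^ (ℓ + 1) - 1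
    · exact Or.inl (hΔ _ _ (by omega) hc)
    · have he : k ^ (ℓ + 1 + 1) = k ^ (ℓ + 2) := by ring
      exact Or.inr (hΔ _ _ (by omega) (by omega))
  have h1 := hcol 1 (by simp)
  have h2 := hcol 2 (by simp)
  have h3 := hcol 3 (by simp)
  by_cases e12 : Δ₁ ((∑ i ∈ Finset.Icc 1 (1 + k - 2), x i) + x (3 * k)) =
      Δ₁ ((∑ i ∈ Finset.Icc 2 (2 + k - 2), x i) + x (3 * k))
  · exact ⟨1, by simp, 2, by simp, by omega, e12⟩
  by_cases e13 : Δ₁ ((∑ i ∈ Finset.Icc 1 (1 + k - 2), x i) + x (3 * k)) =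
      Δ₁ ((∑ i ∈ Finset.Icc 3 (3 + k - 2), x i) + x (3 * k))
  · exact ⟨1, by simp, 3, by simp, by omega, e13⟩
  · exact ⟨2, by simp, 3, by simp, by omega, by omega⟩
end

section
/- Fix an even integer k ≥ 4 and define Δ_1(x) = i iff x ∈ [2^i, 2^{i+1} - 1]. Let x_1 < x_2 < ... be an infinite sequence of positive integers whose consecutive differences strictly increase. Then there is no way that the alternating-sum coloring satisfies the min-max pattern: i.e., it is false that for all k-element sets I, J of indices, Δ_1(Σ*_{i∈I} x_i) = Δ_1(Σ*_{j∈J} x_j) if and only if min I = min J and max I = max J. (Proof sketch: with R = {i_1, i_3, ..., i_k, i_{k+2}}, B = {i_1, i_3, ..., i_{k-1}, i_{k+1}, i_{k+2}}, G = {i_2, i_3, ..., i_k, i_{k+2}}, one gets b < g < r with Δ_1(b) = Δ_1(r) forcing Δ_1(g) = Δ_1(b), contradicting min G ≠ min B.) -/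
/-- The alternating sum `x_{j_k} - x_{j_{k-1}} + ⋯` over a finite index set
`J = {j_1 < j_2 < ⋯ < j_k}`, starting with `+` at the largest index. -/
def altSum (x : ℕ → ℕ) (J : Finset ℕ) : ℤ :=
  (((J.sort (· ≤ ·)).reverse).map fun i => (x i : ℤ)).alternatingSum

namespace AltSumAux

def S (f : ℕ → ℤ) (l : List ℕ) : ℤ := ((l.reverse).map f).alternatingSum

lemma S_append (f : ℕ → ℤ) (l₁ l₂ : List ℕ) :
    S f (l₁ ++ l₂) = S f l₂ + (-1 : ℤ) ^ l₂.length • S f l₁ := by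
  unfold S
  rw [List.reverse_append, List.map_append, List.alternatingSum_append]
  simp

lemma S_singleton (f : ℕ → ℤ) (a : ℕ) : S f [a] = f a := by
  simp [S, List.alternatingSum]

lemma S_pair (f : ℕ → ℤ) (a b : ℕ) : S f [a, b] = f b - f a := by
  simp only [S, List.reverse_cons, List.reverse_nil, List.nil_append,
    List.cons_append, List.map_cons, List.map_nil, List.alternatingSum]
  ring

lemma S_nonneg (x : ℕ → ℕ) (hm : Monotone x) :
    ∀ l : List ℕ, l.Pairwise (· ≤ ·) → Even l.length →
      0 ≤ S (fun i => (x i : ℤ)) l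
  | [] => by intro _ _; simp [S]
  | [a] => by intro _ h; simp at h
  | a :: b :: t => by
    intro hs he
    have hab : a ≤ b := (List.pairwise_cons.mp hs).1 b (by simp)
    have ht : t.Pairwise (· ≤ ·) := ((List.pairwise_cons.mp (List.pairwise_cons.mp hs).2).2)
    have hte : Even t.length := by
      rcases he with ⟨r, hr⟩
      exact ⟨r - 1, by simp at hr ⊢; omega⟩
    have ih := S_nonneg x hm t ht hte
    have hdecomp : (a :: b :: t) = [a, b] ++ t := rfl
    rw [hdecomp, S_append, S_pair]
    have hxy : (x a : ℤ) ≤ x b := by exact_mod_cast hm hab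
    rw [hte.neg_one_pow]
    simp only [one_smul]
    linarith

end AltSumAux

theorem stmt_9 (k : ℕ) (hk : 4 ≤ k) (hke : Even k)
    (Δ₁ : ℕ → ℕ) (hΔ : ∀ n i : ℕ, 2 ^ i ≤ n → n ≤ 2 ^ (i + 1) - 1 → Δ₁ n = i)
    (x : ℕ → ℕ) (hmono : StrictMono x) (hpos : ∀ n, 0 < x n)
    (hdiff : ∀ i, x (i + 1) - x i < x (i + 2) - x (i + 1)) :
    ¬ ∀ I J : Finset ℕ, I.card = k → J.card = k →
        (Δ₁ (altSum x I).toNat = Δ₁ (altSum x J).toNat ↔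
          (I.min = J.min ∧ I.max = J.max)) := by
  open AltSumAux in
  intro H
  obtain ⟨m, rfl⟩ : ∃ m, k = m + 4 := ⟨k - 4, by omega⟩
  have hme : Even m := by
    rcases hke with ⟨t, ht⟩; exact ⟨t - 2, by omega⟩
  set f : ℕ → ℤ := fun i => (x i : ℤ) with hf
  set P : List ℕ := 0 :: List.range' 2 (m + 1) with hP
  set Q : List ℕ := List.range' 2 (m + 2) ++ [m + 5] with hQ
  set LR : List ℕ := P ++ [m + 3, m + 5] with hLR
  set LB : List ℕ := P ++ [m + 4, m + 5] with hLB
  set LG : List ℕ := 1 :: Q with hLG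
  have hLR' : LR = [0] ++ Q := by
    simp only [hLR, hP, hQ, List.range'_concat]
    simp
    omega
  -- sortedness
  have hsR : LR.Pairwise (· < ·) := by
    simp only [hLR, hP, List.Pairwise, List.cons_append, List.pairwise_cons,
      List.pairwise_append, List.mem_append, List.mem_range'_1, List.mem_cons,
      List.mem_singleton, List.not_mem_nil, false_implies, implies_true,
      and_true, true_and]
    refine ⟨?_, List.pairwise_lt_range' (s := 2), ⟨?_, List.Pairwise.nil⟩, ?_⟩
    · intro a h; rcases h with ⟨h1, h2⟩ | rfl | rfl | hF <;> first | omega | exact hF.elim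
    · intro a h; rcases h with rfl | hF <;> first | omega | exact hF.elim
    · intro a ha b hb; rcases hb with rfl | rfl | hF <;> first | omega | exact hF.elim
  have hsB : LB.Pairwise (· < ·) := by
    simp only [hLB, hP, List.Pairwise, List.cons_append, List.pairwise_cons,
      List.pairwise_append, List.mem_append, List.mem_range'_1, List.mem_cons,
      List.mem_singleton, List.not_mem_nil, false_implies, implies_true,
      and_true, true_and]
    refine ⟨?_, List.pairwise_lt_range' (s := 2), ⟨?_, List.Pairwise.nil⟩, ?_⟩
    · intro a h; rcases h with ⟨h1, h2⟩ | rfl | rfl | hF <;> first | omega | exact hF.elim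
    · intro a h; rcases h with rfl | hF <;> first | omega | exact hF.elim
    · intro a ha b hb; rcases hb with rfl | rfl | hF <;> first | omega | exact hF.elim
  have hsG : LG.Pairwise (· < ·) := by
    simp only [hLG, hQ, List.Pairwise, List.cons_append, List.pairwise_cons,
      List.pairwise_append, List.mem_append, List.mem_range'_1, List.mem_cons,
      List.mem_singleton, List.not_mem_nil, false_implies, implies_true,
      and_true, true_and]
    refine ⟨?_, List.pairwise_lt_range' (s := 2), List.Pairwise.nil, ?_⟩
    · intro a h; rcases h with ⟨h1, h2⟩ | rfl | hF <;> first | omega | exact hF.elim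
    · intro a ha b hb; rcases hb with rfl | hF <;> first | omega | exact hF.elim
  have key : ∀ L : List ℕ, L.Pairwise (· < ·) →
      altSum x L.toFinset = S f L ∧ L.toFinset.card = L.length := by
    intro L hs
    have hnd : L.Nodup := hs.nodup
    have hle : L.Pairwise (· ≤ ·) := hs.imp (fun h => le_of_lt h)
    have hsort : L.toFinset.sort (· ≤ ·) = L := (List.toFinset_sort _ hnd).mpr hle
    constructor
    · unfold altSum S
      rw [hsort]
    · rw [List.toFinset_card_of_nodup hnd]
  obtain ⟨hRv, hRc⟩ := key LR hsR
  obtain ⟨hBv, hBc⟩ := key LB hsB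
  obtain ⟨hGv, hGc⟩ := key LG hsG
  have hPlen : P.length = m + 2 := by simp [hP]
  have hQlen : Q.length = m + 3 := by simp [hQ]
  have hRlen : LR.length = m + 4 := by simp [hLR, hPlen]
  have hBlen : LB.length = m + 4 := by simp [hLB, hPlen]
  have hGlen : LG.length = m + 4 := by simp [hLG, hQlen]
  -- values
  have hPe : Even P.length := by rw [hPlen]; rcases hme with ⟨t, ht⟩; exact ⟨t + 1, by omega⟩
  have hr : S f LR = (f (m + 5) - f (m + 3)) + S f P := by
    rw [hLR, S_append, S_pair]
    norm_num
  have hb : S f LB = (f (m + 5) - f (m + 4)) + S f P := by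
    rw [hLB, S_append, S_pair]
    norm_num
  have hQodd : Odd Q.length := by
    rw [hQlen]; rcases hme with ⟨t, ht⟩; exact ⟨t + 1, by omega⟩
  have hr' : S f LR = S f Q - f 0 := by
    rw [hLR', S_append, S_singleton, hQodd.neg_one_pow]
    simp only [neg_smul, one_smul]
    ring
  have hg : S f LG = S f Q - f 1 := by
    have hdec : LG = [1] ++ Q := rfl
    rw [hdec, S_append, S_singleton, hQodd.neg_one_pow]
    simp only [neg_smul, one_smul]
    ring
  -- difference comparison
  have hdN : StrictMono (fun i => x (i + 1) - x i) := strictMono_nat_of_lt_succ hdiff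
  have hd01 : f 1 - f 0 < f (m + 4) - f (m + 3) := by
    have h : x (0 + 1) - x 0 < x (m + 3 + 1) - x (m + 3) := hdN (show 0 < m + 3 by omega)
    have e1 : x 0 ≤ x 1 := (hmono Nat.zero_lt_one).le
    have e2 : x (m + 3) ≤ x (m + 4) := (hmono (by omega)).le
    simp only [Nat.zero_add, show m + 3 + 1 = m + 4 from rfl] at h
    simp only [hf]
    omega
  set b : ℤ := S f LB with hbv
  set g : ℤ := S f LG with hgv
  set r : ℤ := S f LR with hrv
  have hgr : g < r := by
    have hx01 : f 0 < f 1 := by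
      simp only [hf]; exact_mod_cast hmono Nat.zero_lt_one
    rw [hg, hr']at *
    linarith
  have hbg : b < g := by
    rw [hb, hg] at *
    rw [hr'] at hr
    linarith
  -- positivity
  have hPsorted : P.Pairwise (· ≤ ·) := by
    simp only [hP, List.Pairwise, List.pairwise_cons, List.mem_range'_1]
    constructor
    · intro a h; omega
    · exact (List.pairwise_lt_range' (s := 2) (n := m + 1)).imp fun h => le_of_lt h
  have hSP : 0 ≤ S f P := S_nonneg x hmono.monotone P hPsorted hPe
  have hx45 : f (m + 4) < f (m + 5) := by
    simp only [hf]; exact_mod_cast hmono (show m + 4 < m + 5 by omega)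
  have hb1 : (1 : ℤ) ≤ b := by rw [hb]; linarith
  have hg1 : (1 : ℤ) ≤ g := le_of_lt (lt_of_le_of_lt hb1 hbg)
  have hr1 : (1 : ℤ) ≤ r := le_of_lt (lt_of_le_of_lt hg1 hgr)
  -- min and max
  have h0R : (0 : ℕ) ∈ LR.toFinset := by simp [hLR, hP]
  have h0B : (0 : ℕ) ∈ LB.toFinset := by simp [hLB, hP]
  have htopR : (m + 5 : ℕ) ∈ LR.toFinset := by simp [hLR]
  have htopB : (m + 5 : ℕ) ∈ LB.toFinset := by simp [hLB]
  have htopG : (m + 5 : ℕ) ∈ LG.toFinset := by simp [hLG, hQ]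
  have hboundR : ∀ a ∈ LR.toFinset, a ≤ m + 5 := by
    intro a ha
    simp only [hLR, hP, List.mem_toFinset, List.cons_append, List.mem_cons,
      List.mem_append, List.mem_range'_1, List.mem_singleton, List.not_mem_nil,
      or_false] at ha
    rcases ha with rfl | ⟨h1, h2⟩ | rfl | rfl <;> omega
  have hboundB : ∀ a ∈ LB.toFinset, a ≤ m + 5 := by
    intro a ha
    simp only [hLB, hP, List.mem_toFinset, List.cons_append, List.mem_cons,
      List.mem_append, List.mem_range'_1, List.mem_singleton, List.not_mem_nil,
      or_false] at ha
    rcases ha with rfl | ⟨h1, h2⟩ | rfl | rfl <;> omega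
  have hboundG : ∀ a ∈ LG.toFinset, a ≤ m + 5 := by
    intro a ha
    simp only [hLG, hQ, List.mem_toFinset, List.mem_cons, List.mem_append,
      List.mem_range'_1, List.mem_singleton, List.not_mem_nil, or_false] at ha
    rcases ha with rfl | ⟨h1, h2⟩ | rfl <;> omega
  have hminR : LR.toFinset.min = ((0 : ℕ) : WithTop ℕ) := by
    refine le_antisymm (Finset.min_le h0R) (Finset.le_min ?_)
    intro a _
    exact WithTop.coe_le_coe.mpr (Nat.zero_le a)
  have hminB : LB.toFinset.min = ((0 : ℕ) : WithTop ℕ) := by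
    refine le_antisymm (Finset.min_le h0B) (Finset.le_min ?_)
    intro a _
    exact WithTop.coe_le_coe.mpr (Nat.zero_le a)
  have hmaxR : LR.toFinset.max = ((m + 5 : ℕ) : WithBot ℕ) := by
    refine le_antisymm (Finset.max_le ?_) (Finset.le_max htopR)
    intro a ha
    exact WithBot.coe_le_coe.mpr (hboundR a ha)
  have hmaxB : LB.toFinset.max = ((m + 5 : ℕ) : WithBot ℕ) := by
    refine le_antisymm (Finset.max_le ?_) (Finset.le_max htopB)
    intro a ha
    exact WithBot.coe_le_coe.mpr (hboundB a ha)
  -- Δ₁ computations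
  have hΔlog : ∀ n : ℕ, 1 ≤ n → Δ₁ n = Nat.log 2 n := by
    intro n hn
    refine hΔ n _ (Nat.pow_log_le_self 2 (by omega)) ?_
    have := Nat.lt_pow_succ_log_self (by norm_num : 1 < 2) n
    omega
  have hcardR : LR.toFinset.card = m + 4 := by rw [hRc, hRlen]
  have hcardB : LB.toFinset.card = m + 4 := by rw [hBc, hBlen]
  have hcardG : LG.toFinset.card = m + 4 := by rw [hGc, hGlen]
  have hRB : Δ₁ (altSum x LR.toFinset).toNat = Δ₁ (altSum x LB.toFinset).toNat :=
    (H LR.toFinset LB.toFinset hcardR hcardB).mpr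
      ⟨by rw [hminR, hminB], by rw [hmaxR, hmaxB]⟩
  have hbN : (altSum x LB.toFinset).toNat = b.toNat := by rw [hBv]
  have hrN : (altSum x LR.toFinset).toNat = r.toNat := by rw [hRv]
  have hgN : (altSum x LG.toFinset).toNat = g.toNat := by rw [hGv]
  have hb1' : 1 ≤ b.toNat := by omega
  have hg1' : 1 ≤ g.toNat := by omega
  have hr1' : 1 ≤ r.toNat := by omega
  have hbg' : b.toNat ≤ g.toNat := Int.toNat_le_toNat hbg.le
  have hgr' : g.toNat ≤ r.toNat := Int.toNat_le_toNat hgr.le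
  rw [hrN, hbN, hΔlog _ hr1', hΔlog _ hb1'] at hRB
  have hlow : 2 ^ Nat.log 2 b.toNat ≤ b.toNat := Nat.pow_log_le_self 2 (by omega)
  have hhigh : r.toNat < 2 ^ (Nat.log 2 b.toNat + 1) := by
    rw [← hRB]
    exact Nat.lt_pow_succ_log_self (by norm_num) _
  have hΔg : Δ₁ g.toNat = Nat.log 2 b.toNat :=
    hΔ g.toNat _ (le_trans hlow hbg') (by omega)
  have hΔb : Δ₁ b.toNat = Nat.log 2 b.toNat := hΔlog _ hb1'
  have hGB : Δ₁ (altSum x LG.toFinset).toNat = Δ₁ (altSum x LB.toFinset).toNat := by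
    rw [hgN, hbN, hΔg, hΔb]
  have hminGB := ((H LG.toFinset LB.toFinset hcardG hcardB).mp hGB).1
  rw [hminB] at hminGB
  have h0G : (0 : ℕ) ∈ LG.toFinset := Finset.mem_of_min hminGB
  simp only [hLG, hQ, List.mem_toFinset, List.mem_cons, List.mem_append,
    List.mem_range'_1, List.mem_singleton, List.not_mem_nil, or_false] at h0G
  rcases h0G with h | ⟨h1, h2⟩ | h <;> omega
end

section
/- Define Δ_1(x) = i iff x ∈ [2^i, 2^{i+1} - 1]. For any m ≥ 4 positive integers x_{i_1} < ... < x_{i_m} with x_{i_m} ∈ [2^ℓ, 2^{ℓ+1} - 1] and x_{i_j} < 2^{ℓ-1} for j < m, all the differences x_{i_m} - x_{i_j} (j = 1, ..., m-1) lie in [2^{ℓ-1}, 2^{ℓ+1} - 1], and hence at least two of them get the same color under Δ_1 while having distinct minimal indices. Consequently, for no infinite set X = {x_1 < x_2 < ...} is the set of all differences {x_j - x_i : i < j} rainbow under Δ_1. -/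
lemma aux_partA (Δ₁ : ℕ → ℕ)
    (hΔ : ∀ n i : ℕ, 2 ^ i ≤ n → n ≤ 2 ^ (i + 1) - 1 → Δ₁ n = i) :
    ∀ m ℓ : ℕ, 4 ≤ m → ∀ y : ℕ → ℕ, (∀ n, 0 < y n) →
      (∀ i j, 1 ≤ i → i < j → j ≤ m → y i < y j) →
      2 ^ ℓ ≤ y m → y m ≤ 2 ^ (ℓ + 1) - 1 →
      (∀ j, 1 ≤ j → j < m → y j < 2 ^ (ℓ - 1)) →
      (∀ j, 1 ≤ j → j < m → 2 ^ (ℓ - 1) ≤ y m - y j ∧ y m - y j ≤ 2 ^ (ℓ + 1) - 1) ∧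
      ∃ a b, 1 ≤ a ∧ a < b ∧ b < m ∧ Δ₁ (y m - y a) = Δ₁ (y m - y b) := by
  intro m ℓ hm y hpos hmono hlo hhi hsmall
  rcases Nat.eq_zero_or_pos ℓ with hℓ | hℓ
  · -- ℓ = 0 : hypotheses contradictory
    subst hℓ
    have h1 := hsmall 1 le_rfl (by omega)
    simp at h1
    have := hpos 1
    omega
  · have hpow : 2 * 2 ^ (ℓ - 1) = 2 ^ ℓ := by
      rw [← pow_succ']
      congr 1
      omega
    have hpow2 : 2 ^ (ℓ + 1) = 2 * 2 ^ ℓ := by rw [pow_succ]; ring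
    have hbounds : ∀ j, 1 ≤ j → j < m →
        2 ^ (ℓ - 1) ≤ y m - y j ∧ y m - y j ≤ 2 ^ (ℓ + 1) - 1 := by
      intro j hj1 hjm
      have h1 := hsmall j hj1 hjm
      omega
    refine ⟨hbounds, ?_⟩
    have hcolor : ∀ j, 1 ≤ j → j < m →
        Δ₁ (y m - y j) = ℓ - 1 ∨ Δ₁ (y m - y j) = ℓ := by
      intro j hj1 hjm
      obtain ⟨hb1, hb2⟩ := hbounds j hj1 hjm
      rcases le_or_gt (y m - y j) (2 ^ ℓ - 1) with h | h
      · left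
        have := hΔ (y m - y j) (ℓ - 1) hb1 (by
          have : ℓ - 1 + 1 = ℓ := by omega
          rw [this]; exact h)
        exact this
      · right
        exact hΔ (y m - y j) ℓ (by omega) hb2
    have h1 := hcolor 1 (by omega) (by omega)
    have h2 := hcolor 2 (by omega) (by omega)
    have h3 := hcolor 3 (by omega) (by omega)
    rcases h1 with h1 | h1 <;> rcases h2 with h2 | h2 <;> rcases h3 with h3 | h3
    · exact ⟨1, 2, by omega, by omega, by omega, h1.trans h2.symm⟩
    · exact ⟨1, 2, by omega, by omega, by omega, h1.trans h2.symm⟩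
    · exact ⟨1, 3, by omega, by omega, by omega, h1.trans h3.symm⟩
    · exact ⟨2, 3, by omega, by omega, by omega, h2.trans h3.symm⟩
    · exact ⟨2, 3, by omega, by omega, by omega, h2.trans h3.symm⟩
    · exact ⟨1, 3, by omega, by omega, by omega, h1.trans h3.symm⟩
    · exact ⟨1, 2, by omega, by omega, by omega, h1.trans h2.symm⟩
    · exact ⟨1, 2, by omega, by omega, by omega, h1.trans h2.symm⟩

theorem stmt_10 (Δ₁ : ℕ → ℕ)
    (hΔ : ∀ n i : ℕ, 2 ^ i ≤ n → n ≤ 2 ^ (i + 1) - 1 → Δ₁ n = i) :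
    (∀ m ℓ : ℕ, 4 ≤ m → ∀ y : ℕ → ℕ, (∀ n, 0 < y n) →
      (∀ i j, 1 ≤ i → i < j → j ≤ m → y i < y j) →
      2 ^ ℓ ≤ y m → y m ≤ 2 ^ (ℓ + 1) - 1 →
      (∀ j, 1 ≤ j → j < m → y j < 2 ^ (ℓ - 1)) →
      (∀ j, 1 ≤ j → j < m → 2 ^ (ℓ - 1) ≤ y m - y j ∧ y m - y j ≤ 2 ^ (ℓ + 1) - 1) ∧
      ∃ a b, 1 ≤ a ∧ a < b ∧ b < m ∧ Δ₁ (y m - y a) = Δ₁ (y m - y b)) ∧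
    ∀ x : ℕ → ℕ, StrictMono x → (∀ n, 0 < x n) →
      ∃ i j i' j' : ℕ, i < j ∧ i' < j' ∧ (i, j) ≠ (i', j') ∧
        Δ₁ (x j - x i) = Δ₁ (x j' - x i') := by
  refine ⟨aux_partA Δ₁ hΔ, ?_⟩
  intro x hx hposx
  set k : ℕ := Nat.log 2 (x 3) + 1 with hk
  set n : ℕ := 2 ^ (k + 1) with hn
  have hx3 : x 3 < 2 ^ k := Nat.lt_pow_succ_log_self (by norm_num) (x 3)
  have hnk : 4 ≤ n := by
    have : 2 ^ 2 ≤ 2 ^ (k + 1) := Nat.pow_le_pow_right (by norm_num) (by omega)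
    simpa using this
  have hxn : n ≤ x n := hx.le_apply
  set ℓ : ℕ := Nat.log 2 (x n) with hℓ
  have hℓ1 : 2 ^ ℓ ≤ x n := Nat.pow_log_le_self 2 (hposx n).ne'
  have hℓ2 : x n < 2 ^ (ℓ + 1) := Nat.lt_pow_succ_log_self (by norm_num) (x n)
  have hkℓ : k + 1 ≤ ℓ := by
    have h : 2 ^ (k + 1) < 2 ^ (ℓ + 1) := lt_of_le_of_lt hxn hℓ2
    have := (Nat.pow_lt_pow_iff_right (by norm_num : 1 < 2)).mp h
    omega
  have hkℓ' : 2 ^ k ≤ 2 ^ (ℓ - 1) := Nat.pow_le_pow_right (by norm_num) (by omega)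
  set y : ℕ → ℕ := fun j => if j < 4 then x j else x n with hy
  have hy4 : y 4 = x n := by simp [hy]
  have hyj : ∀ j, j < 4 → y j = x j := by intro j hj; simp [hy, hj]
  have hypos : ∀ j, 0 < y j := by
    intro j; by_cases h : j < 4 <;> simp [hy, h] <;> exact hposx _
  have hymono : ∀ i j, 1 ≤ i → i < j → j ≤ 4 → y i < y j := by
    intro i j hi hij hj4
    rcases lt_or_eq_of_le hj4 with h | h
    · rw [hyj i (by omega), hyj j h]; exact hx hij
    · subst h
      rw [hyj i (by omega), hy4]
      exact hx (by omega)
  have hysmall : ∀ j, 1 ≤ j → j < 4 → y j < 2 ^ (ℓ - 1) := by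
    intro j hj1 hj4
    rw [hyj j hj4]
    have : x j ≤ x 3 := by
      rcases Nat.lt_or_ge j 3 with h | h
      · exact (hx h).le
      · have : j = 3 := by omega
        rw [this]
    omega
  obtain ⟨-, a, b, ha1, hab, hb4, hcol⟩ :=
    aux_partA Δ₁ hΔ 4 ℓ le_rfl y hypos hymono (by rw [hy4]; exact hℓ1)
      (by rw [hy4]; omega) hysmall
  refine ⟨a, n, b, n, by omega, by omega, ?_, ?_⟩
  · simp only [ne_eq, Prod.mk.injEq, not_and]
    intro h; omega
  · rw [hy4, hyj a (by omega), hyj b (by omega)] at hcol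
    exact hcol
end

section
/- Let p be an odd prime, and define Δ_2(x) = (v_p(x), x'' mod p) where x = p^{v_p(x)} x''. Suppose x_1 < x_2 < ... are positive integers with strictly increasing p-adic valuations v_p(x_1) < v_p(x_2) < ... and all p-free parts congruent to a fixed x'' mod p. Then for any even k and indices i_1 < i_2 < ... < i_{k+2}, the two alternating sums q = x_{i_{k+2}} - x_{i_{k+1}} + ... + x_{i_6} - x_{i_5} + x_{i_2} - x_{i_1} and s = x_{i_{k+2}} - x_{i_{k+1}} + ... + x_{i_6} - x_{i_5} + x_{i_3} - x_{i_1} satisfy Δ_2(q) = Δ_2(s) = (v_p(x_{i_1}), (p - x'') mod p). -/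
lemma key_aux (p : ℕ) (hp : p.Prime) (v c x'' : ℕ) (hc : c % p = x'')
    (h1 : 1 ≤ x'') (h2 : x'' < p) (q : ℤ) (hq : 0 < q)
    (hdvd : ((p : ℤ)) ^ (v + 1) ∣ q + (p ^ v * c : ℕ)) :
    padicValNat p q.toNat = v ∧
      (q.toNat / p ^ padicValNat p q.toNat) % p = (p - x'') % p := by
  haveI : Fact p.Prime := ⟨hp⟩
  set N := q.toNat with hN
  have hNq : (N : ℤ) = q := Int.toNat_of_nonneg hq.le
  have hN0 : 0 < N := by omega
  have hdvd' : p ^ (v + 1) ∣ N + p ^ v * c := by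
    push_cast at hdvd
    have h : ((p ^ (v + 1) : ℕ) : ℤ) ∣ ((N + p ^ v * c : ℕ) : ℤ) := by
      push_cast
      rw [hNq]
      exact hdvd
    exact_mod_cast h
  obtain ⟨t, ht⟩ := hdvd'
  have hppos : 0 < p := hp.pos
  have hPpos : 0 < p ^ v := pow_pos hppos v
  have hclt : c < p * t := by
    by_contra h
    push_neg at h
    have : p ^ v * (p * t) ≤ p ^ v * c := Nat.mul_le_mul_left _ h
    have h2' : p ^ (v + 1) * t = p ^ v * (p * t) := by ring
    omega
  set d := p * t - c with hdd
  have hd : N = p ^ v * d := by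
    have h2' : p ^ (v + 1) * t = p ^ v * (p * t) := by ring
    have h3 : p ^ v * d = p ^ v * (p * t) - p ^ v * c := Nat.mul_sub _ _ _
    have h4 : p ^ v * c ≤ p ^ v * (p * t) := Nat.mul_le_mul_left _ hclt.le
    omega
  set u := c / p with hu
  have hcval : c = p * u + x'' := by
    rw [hu, ← hc]
    exact (Nat.div_add_mod c p).symm
  have htu : u < t := by
    by_contra h
    push_neg at h
    have : p * t ≤ p * u := Nat.mul_le_mul_left _ h
    omega
  have hw : t = (t - u - 1) + u + 1 := by omega
  set w := t - u - 1 with hww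
  have hd2 : d = p * w + (p - x'') := by
    have h4 : p * t = p * w + p * u + p := by rw [hw]; ring
    omega
  have hdmod : d % p = p - x'' := by
    rw [hd2, Nat.mul_add_mod]
    exact Nat.mod_eq_of_lt (by omega)
  have hnd : ¬ p ∣ d := by
    rintro ⟨e, he⟩
    rw [he, Nat.mul_mod_right] at hdmod
    omega
  have hd0 : d ≠ 0 := by
    intro h
    rw [h] at hdmod
    simp at hdmod
    omega
  have hval : padicValNat p N = v := by
    rw [hd, padicValNat.mul (by positivity) hd0, padicValNat.prime_pow,
      padicValNat.eq_zero_of_not_dvd hnd]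
    omega
  refine ⟨hval, ?_⟩
  rw [hval, hd, Nat.mul_div_cancel_left _ hPpos, hdmod,
    Nat.mod_eq_of_lt (by omega)]

theorem stmt_11 (p : ℕ) (hp : p.Prime) (hodd : Odd p)
    (x : ℕ → ℕ) (hmono : StrictMono x) (hpos : ∀ n, 0 < x n)
    (hvmono : StrictMono fun n => padicValNat p (x n))
    (x'' : ℕ) (hx''1 : 1 ≤ x'') (hx''2 : x'' ≤ p - 1)
    (hfree : ∀ n, (x n / p ^ padicValNat p (x n)) % p = x'')
    (k : ℕ) (hk : 2 ≤ k) (hke : Even k)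
    (i : ℕ → ℕ) (himono : StrictMono i) :
    let Δ₂ : ℕ → ℕ × ℕ := fun m => (padicValNat p m, (m / p ^ padicValNat p m) % p)
    let T : ℤ := ∑ m ∈ Finset.Icc 3 (k / 2 + 1),
      ((x (i (2 * m)) : ℤ) - x (i (2 * m - 1)))
    let q : ℤ := T + x (i 2) - x (i 1)
    let s : ℤ := T + x (i 3) - x (i 1)
    Δ₂ q.toNat = (padicValNat p (x (i 1)), (p - x'') % p) ∧
    Δ₂ s.toNat = (padicValNat p (x (i 1)), (p - x'') % p) := by
  intro Δ₂ T q s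
  have hp2 : 2 ≤ p := hp.two_le
  set v := padicValNat p (x (i 1)) with hv
  set c := x (i 1) / p ^ v with hcdef
  have hdvd1 : p ^ v ∣ x (i 1) := pow_padicValNat_dvd
  have hxc : x (i 1) = p ^ v * c := (Nat.mul_div_cancel' hdvd1).symm
  have hcmod : c % p = x'' := hfree (i 1)
  have hX : ∀ j, 1 < j → ((p : ℤ)) ^ (v + 1) ∣ (x (i j) : ℤ) := by
    intro j hj
    have h1 : v + 1 ≤ padicValNat p (x (i j)) := hvmono (himono hj)
    have h2 : p ^ (v + 1) ∣ x (i j) :=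
      (pow_dvd_pow p h1).trans pow_padicValNat_dvd
    exact_mod_cast Int.natCast_dvd_natCast.mpr h2
  have hT : ((p : ℤ)) ^ (v + 1) ∣ T := by
    apply Finset.dvd_sum
    intro m hm
    rw [Finset.mem_Icc] at hm
    exact dvd_sub (hX (2 * m) (by omega)) (hX (2 * m - 1) (by omega))
  have hT0 : 0 ≤ T := by
    apply Finset.sum_nonneg
    intro m hm
    rw [Finset.mem_Icc] at hm
    have : x (i (2 * m - 1)) ≤ x (i (2 * m)) :=
      (hmono.monotone (himono.monotone (by omega)))
    simp only [sub_nonneg]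
    exact_mod_cast this
  have h12 : (x (i 1) : ℤ) < x (i 2) := by
    exact_mod_cast hmono (himono one_lt_two)
  have h13 : (x (i 1) : ℤ) < x (i 3) := by
    exact_mod_cast hmono (himono (by omega))
  have hx'' : x'' < p := by omega
  have hq : Δ₂ q.toNat = (v, (p - x'') % p) := by
    have hqpos : 0 < q := by simp only [q]; linarith
    have hqdvd : ((p : ℤ)) ^ (v + 1) ∣ q + (p ^ v * c : ℕ) := by
      rw [← hxc]
      have : q + (x (i 1) : ℤ) = T + x (i 2) := by simp only [q]; ring
      rw [this]
      exact dvd_add hT (hX 2 one_lt_two)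
    obtain ⟨h1, h2⟩ := key_aux p hp v c x'' hcmod hx''1 hx'' q hqpos hqdvd
    rw [h1] at h2
    simp only [Δ₂, h1, h2]
  have hs : Δ₂ s.toNat = (v, (p - x'') % p) := by
    have hspos : 0 < s := by simp only [s]; linarith
    have hsdvd : ((p : ℤ)) ^ (v + 1) ∣ s + (p ^ v * c : ℕ) := by
      rw [← hxc]
      have : s + (x (i 1) : ℤ) = T + x (i 3) := by simp only [s]; ring
      rw [this]
      exact dvd_add hT (hX 3 (by omega))
    obtain ⟨h1, h2⟩ := key_aux p hp v c x'' hcmod hx''1 hx'' s hspos hsdvd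
    rw [h1] at h2
    simp only [Δ₂, h1, h2]
  exact ⟨hq, hs⟩
end

section
/- Let k ≥ 2 be even. For every coloring Δ: ℕ → ℕ with finitely many colors, there exists an infinite set X = {x_1 < x_2 < ...} of positive integers such that X together with all alternating sums x_{j_k} - x_{j_{k-1}} + ... + x_{j_2} - x_{j_1} over k-element index sets {j_1 < ... < j_k} is monochromatic. -/
open Finset in
/-- sums over nonempty finsets of indices of a PNat stream are in FS (up to coercion). -/
lemma pnat_sum_mem_FS (a : Stream' ℕ+) :
    ∀ S : Finset ℕ, ∀ hS : S.Nonempty,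
      ∃ m ∈ Hindman.FS (a.drop (S.min' hS)), (m : ℕ) = ∑ i ∈ S, (a.get i : ℕ) := by
  intro S
  induction S using Finset.strongInduction with
  | _ S ih =>
  intro hS
  set n := S.min' hS with hn
  rcases (S.erase n).eq_empty_or_nonempty with h | h
  · refine ⟨a.get n, ?_, ?_⟩
    · rw [← Stream'.head_drop]; exact Hindman.FS.head _
    · have : S = {n} := by
        apply Finset.eq_singleton_iff_unique_mem.mpr
        exact ⟨S.min'_mem hS, fun x hx => by
          by_contra hne; exact absurd (Finset.mem_erase.mpr ⟨hne, hx⟩) (by simp [h])⟩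
      simp [this]
  · obtain ⟨m', hm', hsum⟩ := ih _ (Finset.erase_ssubset <| S.min'_mem hS) h
    have hlt : n + 1 ≤ (S.erase n).min' h :=
      Nat.succ_le_of_lt (Finset.min'_lt_of_mem_erase_min' _ _ <| Finset.min'_mem _ _)
    have hmem : m' ∈ Hindman.FS (a.drop n).tail := by
      have := Hindman.FS_iter_tail_sub_FS (a.drop (n+1)) ((S.erase n).min' h - (n+1))
      rw [Stream'.drop_drop, Nat.add_sub_of_le hlt] at this
      rw [Stream'.tail_eq_drop, Stream'.drop_drop]
      exact this hm'
    refine ⟨(a.drop n).head + m', Hindman.FS.cons _ _ hmem, ?_⟩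
    rw [← Finset.add_sum_erase _ _ (S.min'_mem hS)]
    simp [Stream'.head_drop, hsum, hn]

lemma alt_list_sum (a : ℕ → ℕ) :
    ∀ l : List ℕ, l.Pairwise (· > ·) → Even l.length → l ≠ [] →
    ∃ S : Finset ℕ, S.Nonempty ∧ (∀ i ∈ S, ∃ j ∈ l, i ≤ j) ∧
      (l.map fun i => ((∑ t ∈ Finset.range (i+1), a t : ℕ) : ℤ)).alternatingSum
        = ∑ i ∈ S, (a i : ℤ)
  | [], _, _, hne => absurd rfl hne
  | [b], _, hev, _ => by simp at hev
  | b :: c :: t, hp, hev, _ => by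
    have hbc : c < b := (List.pairwise_cons.mp hp).1 c (by simp)
    have hct : ∀ j ∈ t, j < c := fun j hj =>
      (List.pairwise_cons.mp (List.pairwise_cons.mp hp).2).1 j hj
    have hsub : ((∑ t_1 ∈ Finset.range (b+1), a t_1 : ℕ) : ℤ)
        - ((∑ t_1 ∈ Finset.range (c+1), a t_1 : ℕ) : ℤ)
        = ∑ i ∈ Finset.Ico (c+1) (b+1), (a i : ℤ) := by
      rw [Finset.sum_Ico_eq_sub _ (by omega : c + 1 ≤ b + 1)]
      push_cast
      ring
    rcases t.eq_nil_or_concat with rfl | _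
    · refine ⟨Finset.Ico (c+1) (b+1), Finset.nonempty_Ico.mpr (by omega), ?_, ?_⟩
      · intro i hi; exact ⟨b, by simp, by simp at hi; omega⟩
      · simp only [List.map_cons, List.map_nil, List.alternatingSum_cons_cons',
          List.alternatingSum_nil, add_zero, ← sub_eq_add_neg]
        exact hsub
    · have hne' : t ≠ [] := by rintro rfl; simp_all
      have hev' : Even t.length := by simpa [Nat.even_add_one, parity_simps] using hev
      obtain ⟨St, hStne, hStb, hSteq⟩ := alt_list_sum a t
        ((List.pairwise_cons.mp (List.pairwise_cons.mp hp).2).2) hev' hne'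
      have hdisj : Disjoint (Finset.Ico (c+1) (b+1)) St := by
        rw [Finset.disjoint_left]
        intro i hi hiSt
        obtain ⟨j, hj, hij⟩ := hStb i hiSt
        have := hct j hj
        simp at hi; omega
      refine ⟨Finset.Ico (c+1) (b+1) ∪ St,
        (Finset.nonempty_Ico.mpr (by omega)).mono Finset.subset_union_left, ?_, ?_⟩
      · intro i hi
        rcases Finset.mem_union.mp hi with hi | hi
        · exact ⟨b, by simp, by simp at hi; omega⟩
        · obtain ⟨j, hj, hij⟩ := hStb i hi
          exact ⟨j, by simp [hj], hij⟩
      · rw [Finset.sum_union hdisj, ← hSteq]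
        simp only [List.map_cons, List.alternatingSum_cons_cons', ← sub_eq_add_neg]
        rw [hsub]

theorem stmt_12 (k : ℕ) (hk : 2 ≤ k) (hke : Even k)
    (Δ : ℕ → ℕ) (hfin : (Set.range Δ).Finite) :
    ∃ x : ℕ → ℕ, StrictMono x ∧ (∀ n, 0 < x n) ∧
      ∃ c, (∀ n, Δ (x n) = c) ∧
        ∀ J : Finset ℕ, J.card = k → Δ (altSum x J).toNat = c := by
  -- Hindman's theorem on ℕ+
  obtain ⟨s0, hs0, a, hFS⟩ := Hindman.exists_FS_of_finite_cover
    ((fun v => {m : ℕ+ | Δ (m : ℕ) = v}) '' Set.range Δ) (hfin.image _)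
    (by
      intro m _
      exact Set.mem_sUnion.mpr ⟨_, ⟨Δ (m : ℕ), ⟨(m : ℕ), rfl⟩, rfl⟩, rfl⟩)
  obtain ⟨c, -, rfl⟩ := hs0
  set A : ℕ → ℕ := fun i => (a.get i : ℕ) with hA
  have key : ∀ S : Finset ℕ, S.Nonempty → Δ (∑ i ∈ S, A i) = c := by
    intro S hS
    obtain ⟨m, hm, hms⟩ := pnat_sum_mem_FS a S hS
    have : m ∈ Hindman.FS a := Hindman.FS_iter_tail_sub_FS a (S.min' hS) hm
    have := hFS this
    rwa [← hms]
  refine ⟨fun n => ∑ i ∈ Finset.range (n+1), A i, ?_, ?_, c, ?_, ?_⟩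
  · apply strictMono_nat_of_lt_succ
    intro n
    rw [Finset.sum_range_succ (n := n + 1)]
    have h2 : 0 < A (n+1) := (a.get (n+1)).pos
    omega
  · intro n
    exact Finset.sum_pos (fun i _ => (a.get i).pos) ⟨0, by simp⟩
  · intro n
    exact key _ ⟨0, by simp⟩
  · intro J hJ
    set l := (J.sort (· ≤ ·)).reverse with hl
    have hpl : l.Pairwise (· > ·) := List.pairwise_reverse.mpr (J.sortedLT_sort).pairwise
    have hlen : l.length = k := by simp [hl, hJ]
    obtain ⟨S, hSne, -, heq⟩ := alt_list_sum A l hpl (hlen ▸ hke)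
      (by intro h; rw [h] at hlen; simp at hlen; omega)
    have : altSum (fun n => ∑ i ∈ Finset.range (n+1), A i) J
        = ((∑ i ∈ S, A i : ℕ) : ℤ) := by
      rw [altSum, ← hl, heq]
      push_cast
      rfl
    rw [this, Int.toNat_natCast]
    exact key S hSne
end

section
/- Let k ≥ 3 be odd. For every coloring Δ: ℕ → ℕ with finitely many colors, there exists an infinite set X = {x_1 < x_2 < ...} of positive integers such that X together with all alternating sums x_{j_k} - x_{j_{k-1}} + ... + x_{j_3} - x_{j_2} + x_{j_1} over k-element index sets {j_1 < ... < j_k} is monochromatic. -/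
private lemma FS_pos {a : Stream' ℕ} (ha : ∀ i, 0 < a.get i) :
    ∀ m ∈ Hindman.FS a, 0 < m := by
  intro m hm
  induction hm with
  | head' a' => exact ha 0
  | tail' a' m h ih => exact ih fun i => ha (i + 1)
  | cons' a' m h ih => exact Nat.lt_of_lt_of_le (ha 0) (Nat.le_add_right _ _)

/-- Key computation: the alternating sum over a strictly decreasing list of odd length is a
sum of `b` over a nonempty finite set. -/
private lemma alt_eq_sum (b : ℕ → ℕ) :
    ∀ n (l : List ℕ), l.length = 2 * n + 1 → l.Chain' (· > ·) →
      ∃ S : Finset ℕ, S.Nonempty ∧ (∀ m ∈ S, m ≤ l.headI) ∧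
        (l.map fun i => ((∑ m ∈ Finset.range (i + 1), b m : ℕ) : ℤ)).alternatingSum
          = ∑ m ∈ S, (b m : ℤ) := by
  intro n
  induction n with
  | zero =>
    rintro (_ | ⟨c, (_ | ⟨d, l⟩)⟩) hl _ <;> simp at hl
    refine ⟨Finset.range (c + 1), ⟨0, by simp⟩, ?_, ?_⟩
    · intro m hm
      simpa [Nat.lt_succ_iff] using Finset.mem_range.mp hm
    · simp [List.alternatingSum]
  | succ n ih =>
    rintro (_ | ⟨c₁, (_ | ⟨c₂, l'⟩)⟩) hl hc
    · simp at hl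
    · simp at hl
    simp only [List.length_cons] at hl
    have hl' : l'.length = 2 * n + 1 := by omega
    have hl'ne : l' ≠ [] := by
      intro h; rw [h] at hl'; simp at hl'
    obtain ⟨c₃, t, rfl⟩ := List.exists_cons_of_ne_nil hl'ne
    rw [List.Chain', List.isChain_cons_cons] at hc
    obtain ⟨h12, hc2⟩ := hc
    rw [List.isChain_cons_cons] at hc2
    obtain ⟨h23, hc3⟩ := hc2
    obtain ⟨S', hS'ne, hS'le, hS'⟩ := ih (c₃ :: t) hl' hc3
    simp only [List.headI] at hS'le
    refine ⟨Finset.Ioc c₂ c₁ ∪ S', ?_, ?_, ?_⟩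
    · exact Finset.Nonempty.inl ⟨c₁, Finset.mem_Ioc.mpr ⟨h12, le_refl _⟩⟩
    · intro m hm
      rcases Finset.mem_union.mp hm with h | h
      · exact (Finset.mem_Ioc.mp h).2
      · exact le_trans (hS'le m h) (le_of_lt (lt_trans h23 h12))
    · have hdisj : Disjoint (Finset.Ioc c₂ c₁) S' := by
        rw [Finset.disjoint_left]
        intro m hm hm'
        have h1 := (Finset.mem_Ioc.mp hm).1
        have h2 := hS'le m hm'
        omega
      rw [Finset.sum_union hdisj, ← hS']
      show (_ + -_ + _ : ℤ) = _
      have hsub : ((∑ m ∈ Finset.range (c₁ + 1), b m : ℕ) : ℤ)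
          - ((∑ m ∈ Finset.range (c₂ + 1), b m : ℕ) : ℤ)
          = ∑ m ∈ Finset.Ioc c₂ c₁, (b m : ℤ) := by
        have : Finset.range (c₂ + 1) ⊆ Finset.range (c₁ + 1) :=
          Finset.range_subset_range.mpr (by omega)
        rw [← Finset.sum_sdiff this]
        have : Finset.range (c₁ + 1) \ Finset.range (c₂ + 1) = Finset.Ioc c₂ c₁ := by
          ext m
          simp [Finset.mem_sdiff, Finset.mem_range, Finset.mem_Ioc, Nat.lt_succ_iff]
          omega
        rw [this]
        push_cast
        ring
      rw [← hsub]
      ring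

theorem stmt_13 (k : ℕ) (hk : 3 ≤ k) (hko : Odd k)
    (Δ : ℕ → ℕ) (hfin : (Set.range Δ).Finite) :
    ∃ x : ℕ → ℕ, StrictMono x ∧ (∀ n, 0 < x n) ∧
      ∃ c, (∀ n, Δ (x n) = c) ∧
        ∀ J : Finset ℕ, J.card = k → Δ (altSum x J).toNat = c := by
  -- Apply Hindman's theorem to the FS-set of the stream (1, 2, 3, ...), which consists of
  -- positive numbers, covered by the color classes.
  set a₀ : Stream' ℕ := fun n => n + 1 with ha₀
  have ha₀pos : ∀ i, 0 < a₀.get i := fun i => Nat.succ_pos i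
  set s : Set (Set ℕ) := (fun i => Δ ⁻¹' {i} ∩ {n | 0 < n}) '' Set.range Δ with hs
  have sfin : s.Finite := hfin.image _
  have scov : Hindman.FS a₀ ⊆ ⋃₀ s := by
    intro m hm
    exact ⟨Δ ⁻¹' {Δ m} ∩ {n | 0 < n}, ⟨Δ m, ⟨m, rfl⟩, rfl⟩,
      rfl, FS_pos ha₀pos m hm⟩
  obtain ⟨C, hCs, b, hFS⟩ := Hindman.FS_partition_regular a₀ s sfin scov
  obtain ⟨c, _, rfl⟩ := hCs
  have hb : ∀ m ∈ Hindman.FS b, Δ m = c ∧ 0 < m := fun m hm => ⟨(hFS hm).1, (hFS hm).2⟩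
  have hbpos : ∀ i, 0 < b.get i := fun i => (hb _ (Hindman.FS.singleton b i)).2
  -- define x
  refine ⟨fun n => ∑ m ∈ Finset.range (n + 1), b.get m, ?_, ?_, c, ?_, ?_⟩
  · intro i j hij
    have : Finset.range (i + 1) ⊆ Finset.range (j + 1) := Finset.range_subset_range.mpr (by omega)
    have h := Finset.sum_lt_sum_of_subset this (i := j)
      (by simp) (by simp [Nat.lt_succ_iff]; omega) (hbpos j) (fun k _ _ => Nat.zero_le _)
    exact h
  · intro n
    exact Nat.lt_of_lt_of_le (hbpos 0) (Finset.single_le_sum (fun i _ => Nat.zero_le _)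
      (Finset.mem_range.mpr (Nat.succ_pos n)))
  · intro n
    exact (hb _ (Hindman.FS.finset_sum b _ ⟨0, Finset.mem_range.mpr (Nat.succ_pos n)⟩)).1
  · intro J hJ
    obtain ⟨n, hn⟩ := hko
    -- the reversed sorted list is strictly decreasing of odd length
    set l := (J.sort (· ≤ ·)).reverse with hlr
    have hlen : l.length = 2 * n + 1 := by
      rw [hlr, List.length_reverse, Finset.length_sort, hJ]; omega
    have hchain : l.Chain' (· > ·) := by
      have hsorted : (J.sort (· ≤ ·)).Pairwise (· < ·) := (Finset.sortedLT_sort J).pairwise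
      have : l.Pairwise (· > ·) := by
        rw [hlr, List.pairwise_reverse]
        exact hsorted
      exact this.isChain
    obtain ⟨S, hSne, _, hSeq⟩ := alt_eq_sum (fun m => b.get m) n l hlen hchain
    have : altSum (fun n => ∑ m ∈ Finset.range (n + 1), b.get m) J
        = ((∑ m ∈ S, b.get m : ℕ) : ℤ) := by
      rw [altSum, ← hlr, hSeq]
      push_cast
      rfl
    rw [this, Int.toNat_natCast]
    exact (hb _ (Hindman.FS.finset_sum b S hSne)).1
end

section
/- Let k ≥ 2 be fixed and let Δ: ℕ → ℕ be defined by Δ(x) = ℓ iff x ∈ [k^{ℓ-1}, k^ℓ - 1]. Then for any infinite set X = {x_1 < x_2 < ...} of positive integers with all k-term sums pairwise distinct, the set of k-term sums {Σ_{i∈I} x_i : I ∈ [ℕ]^k} is not rainbow under Δ: if x_m ∈ [k^{ℓ-1}, k^ℓ - 1] with m ≥ max{4, k+1}, then every k-term sum with maximal index m lies strictly between k^{ℓ-1} and k^{ℓ+1} - 1, so takes one of at most two colors, while there are at least 3 such sums. -/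
theorem stmt_14 (k : ℕ) (hk : 2 ≤ k) (Δ : ℕ → ℕ)
    (hΔ : ∀ n ℓ : ℕ, 1 ≤ ℓ → k ^ (ℓ - 1) ≤ n → n ≤ k ^ ℓ - 1 → Δ n = ℓ)
    (x : ℕ → ℕ) (hmono : StrictMono x) (hpos : ∀ n, 0 < x n)
    (hdist : ∀ I J : Finset ℕ, I.card = k → J.card = k →
      (∑ i ∈ I, x i) = (∑ j ∈ J, x j) → I = J) :
    ∃ I J : Finset ℕ, I.card = k ∧ J.card = k ∧ I ≠ J ∧
      Δ (∑ i ∈ I, x i) = Δ (∑ j ∈ J, x j) := by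
  have hk1 : 1 < k := hk
  set m := k + 1 with hm
  set L := Nat.log k (x m) with hL
  have hx1 : k ^ L ≤ x m := Nat.pow_log_le_self k (hpos m).ne'
  have hx2 : x m < k ^ (L + 1) := Nat.lt_pow_succ_log_self hk1 _
  set B := Finset.Ico 3 (k + 2) with hB
  have hmB : m ∈ B := by simp [hB, hm]; omega
  have hcardB : B.card = k - 1 := by simp [hB]
  have key : ∀ j : ℕ, j < 3 →
      (insert j B).card = k ∧
      (Δ (∑ i ∈ insert j B, x i) = L + 1 ∨ Δ (∑ i ∈ insert j B, x i) = L + 2) := by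
    intro j hj
    have hjB : j ∉ B := by simp [hB]; omega
    have hcard : (insert j B).card = k := by
      rw [Finset.card_insert_of_notMem hjB, hcardB]; omega
    refine ⟨hcard, ?_⟩
    have hmS : m ∈ insert j B := Finset.mem_insert_of_mem hmB
    have hupper : ∑ i ∈ insert j B, x i ≤ k * x m := by
      calc ∑ i ∈ insert j B, x i ≤ ∑ _i ∈ insert j B, x m := by
            apply Finset.sum_le_sum
            intro i hi
            apply hmono.monotone
            rcases Finset.mem_insert.mp hi with h | h
            · omega
            · simp [hB] at h; omega
        _ = (insert j B).card * x m := by rw [Finset.sum_const, smul_eq_mul]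
        _ = k * x m := by rw [hcard]
    have hlower : x m + 1 ≤ ∑ i ∈ insert j B, x i := by
      have hsplit := Finset.add_sum_erase _ x hmS
      have hxj : 1 ≤ ∑ i ∈ (insert j B).erase m, x i := by
        have hne : j ∈ (insert j B).erase m := by
          simp [Finset.mem_erase, hm]; omega
        calc 1 ≤ x j := hpos j
          _ ≤ ∑ i ∈ (insert j B).erase m, x i :=
            Finset.single_le_sum (fun i _ => Nat.zero_le _) hne
      omega
    set S := ∑ i ∈ insert j B, x i with hS
    have h1 : k ^ L < S := by omega
    have hmul : k * x m ≤ k ^ (L + 2) - k := by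
      have h3 : k * x m ≤ k * (k ^ (L + 1) - 1) := Nat.mul_le_mul_left k (by omega)
      have h4 : k * (k ^ (L + 1) - 1) = k ^ (L + 2) - k := by
        have h5 : 1 ≤ k ^ (L + 1) := Nat.one_le_pow _ _ (by omega)
        have h6 : k ^ (L + 2) = k * k ^ (L + 1) := by ring
        rw [Nat.mul_sub, h6]; omega
      omega
    have hk2 : k ≤ k ^ (L + 2) := Nat.le_self_pow (by omega) k
    have h2 : S ≤ k ^ (L + 2) - 1 := by omega
    by_cases hc : S ≤ k ^ (L + 1) - 1
    · left
      have := hΔ S (L + 1) (by omega) (by simpa using h1.le) hc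
      exact this
    · right
      have h7 : 1 ≤ k ^ (L + 1) := Nat.one_le_pow _ _ (by omega)
      have h8 : k ^ (L + 1) ≤ S := by omega
      exact hΔ S (L + 2) (by omega) (by simpa using h8) h2
  have hne : ∀ a b : ℕ, a < 3 → b < 3 → a ≠ b → insert a B ≠ insert b B := by
    intro a b ha hb hab h
    have : a ∈ insert b B := h ▸ Finset.mem_insert_self a B
    simp [hB, Finset.mem_insert] at this
    omega
  obtain ⟨hc0, hd0⟩ := key 0 (by omega)
  obtain ⟨hc1, hd1⟩ := key 1 (by omega)
  obtain ⟨hc2, hd2⟩ := key 2 (by omega)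
  rcases hd0 with h0 | h0 <;> rcases hd1 with h1 | h1 <;> rcases hd2 with h2 | h2 <;>
    first
      | exact ⟨insert 0 B, insert 1 B, hc0, hc1, hne 0 1 (by omega) (by omega) (by omega), by omega⟩
      | exact ⟨insert 0 B, insert 2 B, hc0, hc2, hne 0 2 (by omega) (by omega) (by omega), by omega⟩
      | exact ⟨insert 1 B, insert 2 B, hc1, hc2, hne 1 2 (by omega) (by omega) (by omega), by omega⟩
end

section
/- Let k ≥ 2. For every coloring Δ: ℕ → ℕ there exist infinitely many positive integers x_1 < x_2 < ... such that one of the following holds for all k-element index sets I, J: (i) Δ(Σ_{i∈I} x_i) = Δ(Σ_{j∈J} x_j) always; (ii) Δ(Σ_{i∈I} x_i) = Δ(Σ_{j∈J} x_j) iff I = J; (iii) Δ(Σ_{i∈I} x_i) = Δ(Σ_{j∈J} x_j) iff max I = max J. -/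
open Filter

attribute [local instance] Ultrafilter.addSemigroup Ultrafilter.add

namespace Stmt15

variable {K : Type*}

lemma exists_limU [Finite K] (U : Ultrafilter ℕ) (f : ℕ → K) :
    ∃ c : K, {t | f t = c} ∈ U := by
  by_contra h
  push_neg at h
  have h2 : ∀ c : K, {t | f t ≠ c} ∈ U := by
    intro c
    have := (Ultrafilter.compl_mem_iff_notMem (s := {t | f t = c}) (f := U)).2 (h c)
    simpa [Set.compl_setOf] using this
  have : (⋂ c : K, {t | f t ≠ c}) ∈ U := by
    rw [← Ultrafilter.mem_coe, Filter.iInter_mem]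
    exact h2
  have hne := Ultrafilter.nonempty_of_mem this
  obtain ⟨t, ht⟩ := hne
  simp only [Set.mem_iInter, Set.mem_setOf_eq] at ht
  exact ht (f t) rfl

noncomputable def limU [Finite K] (U : Ultrafilter ℕ) (f : ℕ → K) : K :=
  (exists_limU U f).choose

lemma limU_spec [Finite K] (U : Ultrafilter ℕ) (f : ℕ → K) :
    {t | f t = limU U f} ∈ U :=
  (exists_limU U f).choose_spec

lemma finite_not_mem (U : Ultrafilter ℕ) (hU : U + U = U) {P : Set ℕ} (hP : P ∈ U)
    (hP0 : 0 ∉ P) {A : Set ℕ} (hA : A.Finite) : A ∉ U := by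
  intro hAU
  obtain ⟨a, _, rfl⟩ := Ultrafilter.eq_pure_of_finite_mem hA hAU
  have h1 : ∀ᶠ n in ((pure a + pure a : Ultrafilter ℕ) : Filter ℕ), n = a + a := by
    rw [Ultrafilter.eventually_add]
    simp
  rw [hU] at h1
  have : a + a = a := by simpa using h1
  have ha : a = 0 := by omega
  subst ha
  exact hP0 (by simpa using hP)

lemma unbounded_mem (U : Ultrafilter ℕ) (hU : U + U = U) {P : Set ℕ} (hP : P ∈ U)
    (hP0 : 0 ∉ P) (b : ℕ) : {t : ℕ | b < t} ∈ U := by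
  have : ¬ ({t : ℕ | ¬ b < t} ∈ U) := by
    apply finite_not_mem U hU hP hP0
    have : {t : ℕ | ¬ b < t} ⊆ Set.Iic b := by intro t ht; simpa using ht
    exact (Set.finite_Iic b).subset this
  rcases U.mem_or_compl_mem {t : ℕ | b < t} with h | h
  · exact h
  · exact absurd (by simpa [Set.compl_setOf] using h) this

lemma star_mem (U : Ultrafilter ℕ) (hU : U + U = U) {A : Set ℕ} (hA : A ∈ U) :
    {t | t ∈ A ∧ {s | t + s ∈ A} ∈ U} ∈ U := by
  have h1 : A ∈ (U + U : Ultrafilter ℕ) := by rw [hU]; exact hA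
  have h1' : ∀ᶠ t in ((U + U : Ultrafilter ℕ) : Filter ℕ), t ∈ A := h1
  rw [Ultrafilter.eventually_add] at h1'
  exact Filter.inter_mem hA h1'

lemma image_val_attachFin {n : ℕ} (s : Finset ℕ) (h : ∀ m ∈ s, m < n) :
    (s.attachFin h).image (Fin.val) = s := by
  ext a
  simp only [Finset.mem_image]
  constructor
  · rintro ⟨b, hb, rfl⟩
    exact (Finset.mem_attachFin h).1 hb
  · intro ha
    exact ⟨⟨a, h a ha⟩, (Finset.mem_attachFin h).2 ha, rfl⟩

/-! ## The Milliken–Taylor style machinery -/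

section MT

variable [Finite K]
variable (U : Ultrafilter ℕ) (m : ℕ) (χ : List ℕ → K)

noncomputable def Fℓ : ℕ → List ℕ → K
  | 0, v => χ v
  | r+1, v => limU U (fun t => Fℓ r (v ++ [t]))

noncomputable def D (v : List ℕ) : K := Fℓ U χ (m - v.length) v

def Tset (v : List ℕ) : Set ℕ := {t | D U m χ (v ++ [t]) = D U m χ v}

lemma D_full (v : List ℕ) (h : v.length = m) : D U m χ v = χ v := by
  rw [D, h, Nat.sub_self]
  rfl

lemma Tset_mem (v : List ℕ) (h : v.length < m) : Tset U m χ v ∈ U := by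
  have h1 : m - v.length = (m - v.length - 1) + 1 := by omega
  have h2 : D U m χ v = limU U (fun t => Fℓ U χ (m - v.length - 1) (v ++ [t])) := by
    rw [D, h1]
    rfl
  have h3 : ∀ t, D U m χ (v ++ [t]) = Fℓ U χ (m - v.length - 1) (v ++ [t]) := by
    intro t
    rw [D]
    congr 1
    simp only [List.length_append, List.length_cons, List.length_nil]
    omega
  have := limU_spec U (fun t => Fℓ U χ (m - v.length - 1) (v ++ [t]))
  have heq : Tset U m χ v = {t | Fℓ U χ (m - v.length - 1) (v ++ [t])
      = limU U (fun t => Fℓ U χ (m - v.length - 1) (v ++ [t]))} := by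
    ext t
    simp only [Tset, Set.mem_setOf_eq, h3 t, h2]
  rw [heq]
  exact this

/-- obligation index: tuples of length `j < m` of groups of indices `< n` -/
def Idx (n : ℕ) : Type := (j : Fin m) × (Fin (j : ℕ) → Finset (Fin n))

instance (n : ℕ) : Finite (Idx m n) := by
  unfold Idx
  infer_instance

def validIdx {n : ℕ} (ι : Idx m n) : Prop :=
  (∀ r, (ι.2 r).Nonempty) ∧
  ∀ r1 r2 : Fin (ι.1 : ℕ), r1 < r2 → ∀ i ∈ ι.2 r1, ∀ i' ∈ ι.2 r2, i < i'

def gvals (h : List ℕ) (ι : Idx m h.length) : List ℕ :=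
  List.ofFn (fun r : Fin (ι.1 : ℕ) => ∑ i ∈ ι.2 r, h.getD (i : ℕ) 0)

def Obl (h : List ℕ) : Set ℕ :=
  ⋂ (ι : Idx m h.length), ⋂ (_ : validIdx m ι), Tset U m χ (gvals m h ι)

lemma Obl_mem (h : List ℕ) : Obl U m χ h ∈ U := by
  rw [Obl, ← Ultrafilter.mem_coe, Filter.iInter_mem]
  intro ι
  by_cases hv : validIdx m ι
  · have : (⋂ (_ : validIdx m ι), Tset U m χ (gvals m h ι)) = Tset U m χ (gvals m h ι) := by
      simp [hv]
    rw [this]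
    apply Tset_mem
    simp only [gvals, List.length_ofFn]
    exact ι.1.2
  · have : (⋂ (_ : validIdx m ι), Tset U m χ (gvals m h ι)) = Set.univ := by
      simp [hv]
    rw [this]
    exact Filter.univ_mem

lemma Obl_subset (h : List ℕ) (ι : Idx m h.length) (hv : validIdx m ι) :
    Obl U m χ h ⊆ Tset U m χ (gvals m h ι) := by
  intro t ht
  simp only [Obl, Set.mem_iInter] at ht
  exact ht ι hv


section Construction

structure St (U : Ultrafilter ℕ) where
  hist : List ℕ
  bound : ℕ
  B : Set ℕ
  hB : B ∈ U

def pickSet (s : St U) : Set ℕ :=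
  {t | (t ∈ s.B ∧ {z | t + z ∈ s.B} ∈ U) ∧ s.bound < t}

lemma pickSet_mem (hU : U + U = U) (P : Set ℕ) (hP : P ∈ U) (hP0 : 0 ∉ P) (s : St U) :
    pickSet U s ∈ U :=
  Filter.inter_mem (star_mem U hU s.hB) (unbounded_mem U hU hP hP0 s.bound)

noncomputable def pick (hU : U + U = U) (P : Set ℕ) (hP : P ∈ U) (hP0 : 0 ∉ P) (s : St U) : ℕ :=
  (Ultrafilter.nonempty_of_mem (pickSet_mem U hU P hP hP0 s)).choose

lemma pick_spec (hU : U + U = U) (P : Set ℕ) (hP : P ∈ U) (hP0 : 0 ∉ P) (s : St U) :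
    pick U hU P hP hP0 s ∈ pickSet U s :=
  (Ultrafilter.nonempty_of_mem (pickSet_mem U hU P hP hP0 s)).choose_spec

noncomputable def nextSt (hU : U + U = U) (P : Set ℕ) (hP : P ∈ U) (hP0 : 0 ∉ P) (s : St U) : St U :=
  { hist := s.hist ++ [pick U hU P hP hP0 s]
    bound := pick U hU P hP hP0 s
    B := s.B ∩ {z | pick U hU P hP hP0 s + z ∈ s.B} ∩
      Obl U m χ (s.hist ++ [pick U hU P hP hP0 s])
    hB := Filter.inter_mem
      (Filter.inter_mem s.hB (pick_spec U hU P hP hP0 s).1.2)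
      (Obl_mem U m χ _) }

noncomputable def initSt (P : Set ℕ) (hP : P ∈ U) : St U :=
  { hist := []
    bound := 0
    B := P ∩ Obl U m χ []
    hB := Filter.inter_mem hP (Obl_mem U m χ []) }

noncomputable def states (hU : U + U = U) (P : Set ℕ) (hP : P ∈ U) (hP0 : 0 ∉ P) (n : ℕ) : St U :=
  (nextSt U m χ hU P hP hP0)^[n] (initSt U m χ P hP)

noncomputable def xs (hU : U + U = U) (P : Set ℕ) (hP : P ∈ U) (hP0 : 0 ∉ P) (n : ℕ) : ℕ := pick U hU P hP hP0 (states U m χ hU P hP hP0 n)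

lemma states_succ (hU : U + U = U) (P : Set ℕ) (hP : P ∈ U) (hP0 : 0 ∉ P) (n : ℕ) :
    states U m χ hU P hP hP0 (n+1) = nextSt U m χ hU P hP hP0 (states U m χ hU P hP hP0 n) := by
  rw [states, Function.iterate_succ_apply', states]

lemma states_hist_succ (hU : U + U = U) (P : Set ℕ) (hP : P ∈ U) (hP0 : 0 ∉ P) (n : ℕ) :
    (states U m χ hU P hP hP0 (n+1)).hist
      = (states U m χ hU P hP hP0 n).hist ++ [xs U m χ hU P hP hP0 n] := by
  rw [states_succ]; rfl

lemma states_bound_succ (hU : U + U = U) (P : Set ℕ) (hP : P ∈ U) (hP0 : 0 ∉ P) (n : ℕ) :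
    (states U m χ hU P hP hP0 (n+1)).bound = xs U m χ hU P hP hP0 n := by
  rw [states_succ]; rfl

lemma states_B_succ (hU : U + U = U) (P : Set ℕ) (hP : P ∈ U) (hP0 : 0 ∉ P) (n : ℕ) :
    (states U m χ hU P hP hP0 (n+1)).B
      = (states U m χ hU P hP hP0 n).B
        ∩ {z | xs U m χ hU P hP hP0 n + z ∈ (states U m χ hU P hP hP0 n).B}
        ∩ Obl U m χ ((states U m χ hU P hP hP0 n).hist ++ [xs U m χ hU P hP hP0 n]) := by
  rw [states_succ]; rfl

lemma xs_mem (hU : U + U = U) (P : Set ℕ) (hP : P ∈ U) (hP0 : 0 ∉ P) (n : ℕ) : xs U m χ hU P hP hP0 n ∈ (states U m χ hU P hP hP0 n).B :=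
  (pick_spec U hU P hP hP0 _).1.1

lemma xs_gt_bound (hU : U + U = U) (P : Set ℕ) (hP : P ∈ U) (hP0 : 0 ∉ P) (n : ℕ) : (states U m χ hU P hP hP0 n).bound < xs U m χ hU P hP hP0 n :=
  (pick_spec U hU P hP hP0 _).2

lemma xs_strictMono (hU : U + U = U) (P : Set ℕ) (hP : P ∈ U) (hP0 : 0 ∉ P) : StrictMono (xs U m χ hU P hP hP0) := by
  apply strictMono_nat_of_lt_succ
  intro n
  have h := xs_gt_bound U m χ hU P hP hP0 (n+1)
  rwa [states_bound_succ] at h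

lemma B_succ_subset (hU : U + U = U) (P : Set ℕ) (hP : P ∈ U) (hP0 : 0 ∉ P) (n : ℕ) :
    (states U m χ hU P hP hP0 (n+1)).B ⊆ (states U m χ hU P hP hP0 n).B := by
  rw [states_B_succ]
  exact fun z hz => hz.1.1

lemma B_mono (hU : U + U = U) (P : Set ℕ) (hP : P ∈ U) (hP0 : 0 ∉ P) {a b : ℕ} (h : a ≤ b) :
    (states U m χ hU P hP hP0 b).B ⊆ (states U m χ hU P hP hP0 a).B := by
  induction b, h using Nat.le_induction with
  | base => exact fun z hz => hz
  | succ b hb ih => exact fun z hz => ih (B_succ_subset U m χ hU P hP hP0 b hz)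

lemma B_subset_P (hU : U + U = U) (P : Set ℕ) (hP : P ∈ U) (hP0 : 0 ∉ P) (n : ℕ) : (states U m χ hU P hP hP0 n).B ⊆ P := by
  intro z hz
  have := B_mono U m χ hU P hP hP0 (Nat.zero_le n) hz
  exact this.1

lemma xs_mem_P (hU : U + U = U) (P : Set ℕ) (hP : P ∈ U) (hP0 : 0 ∉ P) (n : ℕ) : xs U m χ hU P hP hP0 n ∈ P :=
  B_subset_P U m χ hU P hP hP0 n (xs_mem U m χ hU P hP hP0 n)

lemma hist_eq (hU : U + U = U) (P : Set ℕ) (hP : P ∈ U) (hP0 : 0 ∉ P) (n : ℕ) :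
    (states U m χ hU P hP hP0 n).hist = (List.range n).map (xs U m χ hU P hP hP0) := by
  induction n with
  | zero => rfl
  | succ n ih =>
    rw [states_hist_succ, ih, List.range_succ, List.map_append]
    rfl

lemma hist_length (hU : U + U = U) (P : Set ℕ) (hP : P ∈ U) (hP0 : 0 ∉ P) (n : ℕ) : (states U m χ hU P hP hP0 n).hist.length = n := by
  rw [hist_eq]; simp

lemma hist_getD (hU : U + U = U) (P : Set ℕ) (hP : P ∈ U) (hP0 : 0 ∉ P) (n i : ℕ) (h : i < n) :
    (states U m χ hU P hP hP0 n).hist.getD i 0 = xs U m χ hU P hP hP0 i := by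
  rw [hist_eq]
  rw [List.getD_eq_getElem?_getD]
  rw [List.getElem?_eq_getElem (by simpa using h)]
  simp

lemma sum_mem_B (hU : U + U = U) (P : Set ℕ) (hP : P ∈ U) (hP0 : 0 ∉ P) : ∀ (G : Finset ℕ), G.Nonempty → ∀ n, (∀ i ∈ G, n ≤ i) →
    (∑ i ∈ G, xs U m χ hU P hP hP0 i) ∈ (states U m χ hU P hP hP0 n).B := by
  intro G
  induction G using Finset.strongInduction with
  | _ G ih =>
    intro hne n hn
    set x := xs U m χ hU P hP hP0 with hx
    set a := G.min' hne with ha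
    have haG : a ∈ G := G.min'_mem hne
    have hsum : ∑ i ∈ G, x i = x a + ∑ i ∈ G.erase a, x i :=
      (Finset.add_sum_erase G x haG).symm
    by_cases he : G.erase a = ∅
    · have h0 : ∑ i ∈ G.erase a, x i = 0 := by rw [he]; simp
      rw [hsum, h0, add_zero]
      exact B_mono U m χ hU P hP hP0 (hn a haG) (xs_mem U m χ hU P hP hP0 a)
    · have hne' : (G.erase a).Nonempty := Finset.nonempty_of_ne_empty he
      have hsub : G.erase a ⊂ G := Finset.erase_ssubset haG
      have h1 : ∑ i ∈ G.erase a, x i ∈ (states U m χ hU P hP hP0 (a+1)).B := by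
        apply ih _ hsub hne'
        intro i hi
        obtain ⟨hia, hiG⟩ := Finset.mem_erase.1 hi
        have : a ≤ i := G.min'_le i hiG
        omega
      have h2 : x a + ∑ i ∈ G.erase a, x i ∈ (states U m χ hU P hP hP0 a).B := by
        have h4 : (states U m χ hU P hP hP0 (a+1)).B ⊆
            {z | x a + z ∈ (states U m χ hU P hP hP0 a).B} := by
          rw [states_B_succ]
          exact fun z hz => hz.1.2
        exact h4 h1
      rw [hsum]
      exact B_mono U m χ hU P hP hP0 (hn a haG) h2

lemma B_subset_Obl (hU : U + U = U) (P : Set ℕ) (hP : P ∈ U) (hP0 : 0 ∉ P) (n : ℕ) :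
    (states U m χ hU P hP hP0 n).B ⊆ Obl U m χ (states U m χ hU P hP hP0 n).hist := by
  cases n with
  | zero => exact fun z hz => hz.2
  | succ n =>
    rw [states_B_succ, states_hist_succ]
    exact fun z hz => hz.2


lemma align (hU : U + U = U) (P : Set ℕ) (hP : P ∈ U) (hP0 : 0 ∉ P)
    (g : Fin m → Finset ℕ) (hne : ∀ r, (g r).Nonempty)
    (hsep : ∀ r1 r2 : Fin m, r1 < r2 → ∀ i ∈ g r1, ∀ j ∈ g r2, i < j) :
    ∀ j, j ≤ m →
      D U m χ ((List.ofFn (fun r : Fin m => ∑ i ∈ g r, xs U m χ hU P hP hP0 i)).take j)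
        = D U m χ [] := by
  set x := xs U m χ hU P hP hP0 with hxdef
  set v := List.ofFn (fun r : Fin m => ∑ i ∈ g r, x i) with hvdef
  intro j
  induction j with
  | zero => intro _; simp
  | succ j ihj =>
    intro hj1
    have hj : j < m := hj1
    have ihv := ihj (le_of_lt hj)
    set t := ∑ i ∈ g ⟨j, hj⟩, x i with htdef
    have hvlen : v.length = m := by simp [hvdef]
    have htake : v.take (j+1) = v.take j ++ [t] := by
      rw [List.take_succ]
      congr 1
      have hjv : j < v.length := by omega
      rw [List.getElem?_eq_getElem hjv]
      simp only [hvdef, List.getElem_ofFn, Option.toList_some]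
      rfl
    set i0 := (g ⟨j, hj⟩).min' (hne _) with hi0
    have hmin : i0 ∈ g ⟨j, hj⟩ := Finset.min'_mem _ _
    have ht : t ∈ (states U m χ hU P hP hP0 i0).B := by
      apply sum_mem_B U m χ hU P hP hP0 _ (hne _)
      intro i hi
      exact Finset.min'_le _ i hi
    have hOb : (states U m χ hU P hP hP0 i0).B ⊆ Obl U m χ (states U m χ hU P hP hP0 i0).hist :=
      B_subset_Obl U m χ hU P hP hP0 i0
    have hlen : (states U m χ hU P hP hP0 i0).hist.length = i0 := hist_length U m χ hU P hP hP0 i0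
    have hb : ∀ r : Fin j, ∀ a ∈ g (Fin.castLE (le_of_lt hj) r),
        a < (states U m χ hU P hP hP0 i0).hist.length := by
      intro r a ha
      rw [hlen]
      refine hsep (Fin.castLE (le_of_lt hj) r) ⟨j, hj⟩ ?_ a ha i0 hmin
      exact r.isLt
    set ι : Idx m (states U m χ hU P hP hP0 i0).hist.length :=
      ⟨⟨j, hj⟩, fun r => (g (Fin.castLE (le_of_lt hj) r)).attachFin (hb r)⟩ with hι
    have hval : validIdx m ι := by
      constructor
      · intro r
        rw [← Finset.card_pos, Finset.card_attachFin]
        exact Finset.card_pos.2 (hne _)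
      · intro r1 r2 hr12 i hi i' hi'
        rw [Finset.mem_attachFin] at hi hi'
        have := hsep (Fin.castLE (le_of_lt hj) r1) (Fin.castLE (le_of_lt hj) r2)
          (by exact hr12) _ hi _ hi'
        exact this
    have hgv : gvals m (states U m χ hU P hP hP0 i0).hist ι = v.take j := by
      have h1 : v.take j = List.ofFn (fun r : Fin j => ∑ i ∈ g (Fin.castLE (le_of_lt hj) r), x i) := by
        rw [hvdef, ← Fin.ofFn_take_eq_take_ofFn (le_of_lt hj)]
        rfl
      rw [gvals, h1]
      congr 1
      funext r
      rw [show g (Fin.castLE (le_of_lt hj) r)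
          = ((g (Fin.castLE (le_of_lt hj) r)).attachFin (hb r)).image Fin.val from
          (image_val_attachFin _ (hb r)).symm]
      rw [Finset.sum_image (by intro a _ b _ hab; exact Fin.val_injective hab)]
      apply Finset.sum_congr rfl
      intro i _
      have hi0' : (i : ℕ) < i0 := by
        have h6 := i.isLt
        omega
      exact hist_getD U m χ hU P hP hP0 i0 i hi0'
    have hTt : t ∈ Tset U m χ (v.take j) := by
      have h5 := Obl_subset U m χ _ ι hval
      rw [hgv] at h5
      exact h5 (hOb ht)
    rw [htake]
    calc D U m χ (v.take j ++ [t]) = D U m χ (v.take j) := hTt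
    _ = D U m χ [] := ihv

theorem MT_main (hU : U + U = U) (P : Set ℕ) (hP : P ∈ U) (hP0 : 0 ∉ P) :
    ∃ x : ℕ → ℕ, StrictMono x ∧ (∀ n, x n ∈ P) ∧ ∃ c : K,
      ∀ g : Fin m → Finset ℕ, (∀ r, (g r).Nonempty) →
        (∀ r1 r2 : Fin m, r1 < r2 → ∀ i ∈ g r1, ∀ j ∈ g r2, i < j) →
        χ (List.ofFn fun r => ∑ i ∈ g r, x i) = c := by
  refine ⟨xs U m χ hU P hP hP0, xs_strictMono U m χ hU P hP hP0,
    xs_mem_P U m χ hU P hP hP0, D U m χ [], ?_⟩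
  intro g hne hsep
  have h := align U m χ hU P hP hP0 g hne hsep m le_rfl
  set v := List.ofFn fun r : Fin m => ∑ i ∈ g r, xs U m χ hU P hP hP0 i with hv
  have hlen : v.length = m := by simp [hv]
  have h2 : v.take m = v := by rw [← hlen, List.take_length]
  rw [h2] at h
  rw [← D_full U m χ v hlen]
  exact h

end Construction

end MT


/-! ## Pattern layer -/

section Pat

variable (m : ℕ)

noncomputable def embIJ (W : Finset ℕ) : Fin m → ℕ :=
  fun r => if h : (r : ℕ) < W.card then W.orderEmbOfFin rfl ⟨r, h⟩ else W.sup id + 1 + r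

lemma embIJ_mem {W : Finset ℕ} {r : Fin m} (h : (r : ℕ) < W.card) : embIJ m W r ∈ W := by
  rw [embIJ, dif_pos h]
  exact Finset.orderEmbOfFin_mem W rfl ⟨r, h⟩

lemma embIJ_sep (W : Finset ℕ) (r1 r2 : Fin m) (h : r1 < r2) : embIJ m W r1 < embIJ m W r2 := by
  rw [embIJ, embIJ]
  by_cases h1 : (r1 : ℕ) < W.card <;> by_cases h2 : (r2 : ℕ) < W.card
  · rw [dif_pos h1, dif_pos h2]
    exact (W.orderEmbOfFin rfl).strictMono (by exact h)
  · rw [dif_pos h1, dif_neg h2]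
    have := Finset.le_sup (f := id) (embIJ_mem m h1)
    simp only [id] at this
    have h3 := embIJ_mem m h1
    rw [embIJ, dif_pos h1] at h3
    have := Finset.le_sup (f := id) h3
    simp only [id] at this
    omega
  · omega
  · rw [dif_neg h1, dif_neg h2]
    have : (r1 : ℕ) < (r2 : ℕ) := h
    omega

lemma embIJ_notmem {W : Finset ℕ} {r : Fin m} (h : ¬ (r : ℕ) < W.card) : embIJ m W r ∉ W := by
  rw [embIJ, dif_neg h]
  intro hmem
  have := Finset.le_sup (f := id) hmem
  simp only [id] at this
  omega


lemma embIJ_surj (m : ℕ) {W : Finset ℕ} (hc : W.card ≤ m) {a : ℕ} (ha : a ∈ W) :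
    ∃ r : Fin m, (r : ℕ) < W.card ∧ embIJ m W r = a := by
  have hrange : a ∈ Set.range (W.orderEmbOfFin rfl) := by
    rw [Finset.range_orderEmbOfFin]
    simpa using ha
  obtain ⟨r0, hr0⟩ := Set.mem_range.1 hrange
  have hr0lt : (r0 : ℕ) < W.card := r0.isLt
  refine ⟨⟨(r0 : ℕ), by omega⟩, hr0lt, ?_⟩
  rw [embIJ, dif_pos (show ((⟨(r0 : ℕ), by omega⟩ : Fin m) : ℕ) < W.card from hr0lt)]
  rw [show (⟨((⟨(r0 : ℕ), by omega⟩ : Fin m) : ℕ), hr0lt⟩ : Fin W.card) = r0 from by ext; rfl]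
  exact hr0

noncomputable def posIJ (W A : Finset ℕ) : Finset (Fin m) :=
  Finset.univ.filter (fun r => embIJ m W r ∈ A)

lemma sum_posIJ (x : ℕ → ℕ) (W A : Finset ℕ) (hA : A ⊆ W) (hc : W.card ≤ m) :
    ∑ r ∈ posIJ m W A, x (embIJ m W r) = ∑ i ∈ A, x i := by
  apply Finset.sum_bij (fun r _ => embIJ m W r)
  · intro r hr
    exact (Finset.mem_filter.1 hr).2
  · intro r1 h1 r2 h2 heq
    by_contra hne
    rcases lt_or_gt_of_ne hne with h | h
    · exact absurd heq (Nat.ne_of_lt (embIJ_sep m W _ _ h))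
    · exact absurd heq.symm (Nat.ne_of_lt (embIJ_sep m W _ _ h))
  · intro a ha
    have haW : a ∈ W := hA ha
    have hrange : a ∈ Set.range (W.orderEmbOfFin rfl) := by
      rw [Finset.range_orderEmbOfFin]
      simpa using haW
    obtain ⟨r0, hr0⟩ := Set.mem_range.1 hrange
    have hr0lt : (r0 : ℕ) < W.card := r0.isLt
    refine ⟨⟨(r0 : ℕ), by omega⟩, ?_, ?_⟩
    · rw [posIJ, Finset.mem_filter]
      refine ⟨Finset.mem_univ _, ?_⟩
      rw [embIJ, dif_pos (show ((⟨(r0 : ℕ), by omega⟩ : Fin m) : ℕ) < W.card from hr0lt)]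
      rw [show (⟨((⟨(r0 : ℕ), by omega⟩ : Fin m) : ℕ), hr0lt⟩ : Fin W.card) = r0 from by ext; rfl]
      rw [hr0]
      exact ha
    · rw [embIJ, dif_pos (show ((⟨(r0 : ℕ), by omega⟩ : Fin m) : ℕ) < W.card from hr0lt)]
      rw [show (⟨((⟨(r0 : ℕ), by omega⟩ : Fin m) : ℕ), hr0lt⟩ : Fin W.card) = r0 from by ext; rfl]
      exact hr0
  · intro r hr
    rfl

end Pat


section Sem

variable (m : ℕ) (Δ : ℕ → ℕ) (x : ℕ → ℕ) (c : Finset (Fin m) → Finset (Fin m) → Bool)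

def Bridge : Prop := ∀ g : Fin m → Finset ℕ, (∀ r, (g r).Nonempty) →
  (∀ r1 r2 : Fin m, r1 < r2 → ∀ i ∈ g r1, ∀ j ∈ g r2, i < j) →
  ∀ e f : Finset (Fin m),
    ((Δ (∑ r ∈ e, ∑ i ∈ g r, x i) = Δ (∑ r ∈ f, ∑ i ∈ g r, x i)) ↔ c e f = true)

lemma E_iff_Q (hb : Bridge m Δ x c) (I J : Finset ℕ) (hI : I.Nonempty) (hJ : J.Nonempty)
    (hc : (I ∪ J).card ≤ m) :
    (Δ (∑ i ∈ I, x i) = Δ (∑ i ∈ J, x i)) ↔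
      c (posIJ m (I ∪ J) I) (posIJ m (I ∪ J) J) = true := by
  have hbg := hb (fun r => {embIJ m (I ∪ J) r}) (fun r => ⟨_, Finset.mem_singleton_self _⟩)
    (fun r1 r2 h i hi j hj => by
      rw [Finset.mem_singleton] at hi hj; subst hi; subst hj; exact embIJ_sep m _ _ _ h)
    (posIJ m (I ∪ J) I) (posIJ m (I ∪ J) J)
  rw [← hbg]
  simp only [Finset.sum_singleton]
  rw [sum_posIJ m x (I ∪ J) I Finset.subset_union_left hc,
      sum_posIJ m x (I ∪ J) J Finset.subset_union_right hc]

lemma pos_image (W A : Finset ℕ) (hA : A ⊆ W) (θ : ℕ → ℕ)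
    (hθ : ∀ a ∈ W, ∀ b ∈ W, a < b → θ a < θ b) :
    posIJ m (W.image θ) (A.image θ) = posIJ m W A := by
  have hinj : Set.InjOn θ ↑W := by
    intro a ha b hb hab
    by_contra hne
    rcases lt_or_gt_of_ne hne with h | h
    · exact absurd hab (Nat.ne_of_lt (hθ a ha b hb h))
    · exact absurd hab.symm (Nat.ne_of_lt (hθ b hb a ha h))
  have hcard : (W.image θ).card = W.card := Finset.card_image_of_injOn hinj
  have hkey : ∀ (r : Fin m) (hr : (r : ℕ) < W.card),
      embIJ m (W.image θ) r = θ (embIJ m W r) := by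
    intro r hr
    have hface : (fun r0 : Fin W.card => θ (W.orderEmbOfFin rfl r0))
        = (W.image θ).orderEmbOfFin hcard := by
      apply Finset.orderEmbOfFin_unique hcard
      · intro r0
        exact Finset.mem_image_of_mem θ (Finset.orderEmbOfFin_mem W rfl r0)
      · intro r1 r2 h12
        exact hθ _ (Finset.orderEmbOfFin_mem W rfl r1) _ (Finset.orderEmbOfFin_mem W rfl r2)
          ((W.orderEmbOfFin rfl).strictMono h12)
    have hr' : (r : ℕ) < (W.image θ).card := by omega
    rw [embIJ, dif_pos hr', embIJ, dif_pos hr]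
    have h2 : (W.image θ).orderEmbOfFin rfl ⟨r, hr'⟩
        = (W.image θ).orderEmbOfFin hcard ⟨r, hr⟩ := by
      rw [Finset.orderEmbOfFin_eq_orderEmbOfFin_iff]
    rw [h2, ← hface]
  ext r
  simp only [posIJ, Finset.mem_filter, Finset.mem_univ, true_and]
  by_cases hr : (r : ℕ) < W.card
  · rw [hkey r hr]
    constructor
    · intro hmem
      obtain ⟨a, haA, hae⟩ := Finset.mem_image.1 hmem
      have : a = embIJ m W r := hinj (hA haA) (embIJ_mem m hr) hae
      rwa [← this]
    · intro hmem
      exact Finset.mem_image_of_mem θ hmem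
  · constructor
    · intro hmem
      exact absurd ((Finset.image_subset_image hA) hmem)
        (embIJ_notmem m (by omega))
    · intro hmem
      exact absurd (hA hmem) (embIJ_notmem m hr)

lemma E_transfer (hb : Bridge m Δ x c) (I J : Finset ℕ) (hI : I.Nonempty) (hJ : J.Nonempty)
    (hc : (I ∪ J).card ≤ m) (θ : ℕ → ℕ)
    (hθ : ∀ a ∈ I ∪ J, ∀ b ∈ I ∪ J, a < b → θ a < θ b) :
    (Δ (∑ i ∈ I, x i) = Δ (∑ i ∈ J, x i)) ↔
      (Δ (∑ i ∈ I.image θ, x i) = Δ (∑ i ∈ J.image θ, x i)) := by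
  have hinj : Set.InjOn θ ↑(I ∪ J) := by
    intro a ha b hb hab
    by_contra hne
    rcases lt_or_gt_of_ne hne with h | h
    · exact absurd hab (Nat.ne_of_lt (hθ a ha b hb h))
    · exact absurd hab.symm (Nat.ne_of_lt (hθ b hb a ha h))
  have hu : I.image θ ∪ J.image θ = (I ∪ J).image θ := (Finset.image_union I J).symm
  have hc2 : (I.image θ ∪ J.image θ).card ≤ m := by
    rw [hu, Finset.card_image_of_injOn hinj]
    exact hc
  rw [E_iff_Q m Δ x c hb I J hI hJ hc,
      E_iff_Q m Δ x c hb (I.image θ) (J.image θ) (hI.image θ) (hJ.image θ) hc2]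
  have e1 : posIJ m (I.image θ ∪ J.image θ) (I.image θ) = posIJ m (I ∪ J) I := by
    rw [hu]
    exact pos_image m (I ∪ J) I Finset.subset_union_left θ hθ
  have e2 : posIJ m (I.image θ ∪ J.image θ) (J.image θ) = posIJ m (I ∪ J) J := by
    rw [hu]
    exact pos_image m (I ∪ J) J Finset.subset_union_right θ hθ
  rw [e1, e2]

end Sem


section Cases

variable (m : ℕ) (Δ : ℕ → ℕ) (x : ℕ → ℕ) (c : Finset (Fin m) → Finset (Fin m) → Bool)

def p0 (hm : 3 ≤ m) : Fin m := ⟨0, by omega⟩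
def p1 (hm : 3 ≤ m) : Fin m := ⟨1, by omega⟩
def p2 (hm : 3 ≤ m) : Fin m := ⟨2, by omega⟩

noncomputable def fam3 (A B C : Finset ℕ) : Fin m → Finset ℕ :=
  fun r => if (r : ℕ) = 0 then A else if (r : ℕ) = 1 then B else if (r : ℕ) = 2 then C
    else {(A ∪ B ∪ C).sup id + 1 + r}

lemma fam3_nonempty (A B C : Finset ℕ) (hA : A.Nonempty) (hB : B.Nonempty) (hC : C.Nonempty) :
    ∀ r, (fam3 m A B C r).Nonempty := by
  intro r
  rw [fam3]
  split_ifs <;> first | exact hA | exact hB | exact hC | exact ⟨_, Finset.mem_singleton_self _⟩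

lemma fam3_sep (A B C : Finset ℕ)
    (hAB : ∀ a ∈ A, ∀ b ∈ B, a < b) (hAC : ∀ a ∈ A, ∀ b ∈ C, a < b)
    (hBC : ∀ a ∈ B, ∀ b ∈ C, a < b) :
    ∀ r1 r2 : Fin m, r1 < r2 → ∀ i ∈ fam3 m A B C r1, ∀ j ∈ fam3 m A B C r2, i < j := by
  have hbnd : ∀ a, (a ∈ A ∨ a ∈ B ∨ a ∈ C) → a ≤ (A ∪ B ∪ C).sup id := by
    intro a ha
    apply Finset.le_sup (f := id)
    rcases ha with h | h | h
    · exact Finset.mem_union_left _ (Finset.mem_union_left _ h)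
    · exact Finset.mem_union_left _ (Finset.mem_union_right _ h)
    · exact Finset.mem_union_right _ h
  intro r1 r2 h i hi j hj
  have h12 : (r1 : ℕ) < (r2 : ℕ) := h
  rw [fam3] at hi hj
  split_ifs at hi with h10 h11 h12'
  · -- i ∈ A
    split_ifs at hj with h20 h21 h22
    · omega
    · exact hAB i hi j hj
    · exact hAC i hi j hj
    · have := hbnd i (Or.inl hi)
      rw [Finset.mem_singleton] at hj
      omega
  · split_ifs at hj with h20 h21 h22
    · omega
    · omega
    · exact hBC i hi j hj
    · have := hbnd i (Or.inr (Or.inl hi))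
      rw [Finset.mem_singleton] at hj
      omega
  · split_ifs at hj with h20 h21 h22
    · omega
    · omega
    · omega
    · have := hbnd i (Or.inr (Or.inr hi))
      rw [Finset.mem_singleton] at hj
      omega
  · split_ifs at hj with h20 h21 h22
    · omega
    · omega
    · omega
    · rw [Finset.mem_singleton] at hi hj
      omega

lemma bridge3 (hm : 3 ≤ m) (hb : Bridge m Δ x c) (A B C : Finset ℕ)
    (hA : A.Nonempty) (hB : B.Nonempty) (hC : C.Nonempty)
    (hAB : ∀ a ∈ A, ∀ b ∈ B, a < b) (hAC : ∀ a ∈ A, ∀ b ∈ C, a < b)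
    (hBC : ∀ a ∈ B, ∀ b ∈ C, a < b) :
    ((Δ (∑ i ∈ A, x i + ∑ i ∈ B, x i) = Δ (∑ i ∈ A, x i + ∑ i ∈ B, x i + ∑ i ∈ C, x i)) ↔
        c {p0 m hm, p1 m hm} {p0 m hm, p1 m hm, p2 m hm} = true) ∧
    ((Δ (∑ i ∈ A, x i + ∑ i ∈ C, x i) = Δ (∑ i ∈ A, x i + ∑ i ∈ B, x i + ∑ i ∈ C, x i)) ↔
        c {p0 m hm, p2 m hm} {p0 m hm, p1 m hm, p2 m hm} = true) ∧
    ((Δ (∑ i ∈ A, x i + ∑ i ∈ B, x i) = Δ (∑ i ∈ A, x i + ∑ i ∈ C, x i)) ↔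
        c {p0 m hm, p1 m hm} {p0 m hm, p2 m hm} = true) := by
  have hne := fam3_nonempty m A B C hA hB hC
  have hsep := fam3_sep m A B C hAB hAC hBC
  have hv0 : fam3 m A B C (p0 m hm) = A := by simp [fam3, p0]
  have hv1 : fam3 m A B C (p1 m hm) = B := by simp [fam3, p1]
  have hv2 : fam3 m A B C (p2 m hm) = C := by simp [fam3, p2]
  have h01 : (p0 m hm) ≠ (p1 m hm) := by simp [p0, p1, Fin.ext_iff]
  have h02 : (p0 m hm) ≠ (p2 m hm) := by simp [p0, p2, Fin.ext_iff]
  have h12 : (p1 m hm) ≠ (p2 m hm) := by simp [p1, p2, Fin.ext_iff]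
  have hs01 : ∑ r ∈ ({p0 m hm, p1 m hm} : Finset (Fin m)), ∑ i ∈ fam3 m A B C r, x i
      = ∑ i ∈ A, x i + ∑ i ∈ B, x i := by
    rw [Finset.sum_pair h01, hv0, hv1]
  have hs02 : ∑ r ∈ ({p0 m hm, p2 m hm} : Finset (Fin m)), ∑ i ∈ fam3 m A B C r, x i
      = ∑ i ∈ A, x i + ∑ i ∈ C, x i := by
    rw [Finset.sum_pair h02, hv0, hv2]
  have hs012 : ∑ r ∈ ({p0 m hm, p1 m hm, p2 m hm} : Finset (Fin m)), ∑ i ∈ fam3 m A B C r, x i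
      = ∑ i ∈ A, x i + ∑ i ∈ B, x i + ∑ i ∈ C, x i := by
    rw [Finset.sum_insert (by simp [Finset.mem_insert, h01, h02]),
        Finset.sum_pair h12, hv0, hv1, hv2]
    ring
  refine ⟨?_, ?_, ?_⟩
  · have := hb (fam3 m A B C) hne hsep {p0 m hm, p1 m hm} {p0 m hm, p1 m hm, p2 m hm}
    rwa [hs01, hs012] at this
  · have := hb (fam3 m A B C) hne hsep {p0 m hm, p2 m hm} {p0 m hm, p1 m hm, p2 m hm}
    rwa [hs02, hs012] at this
  · have := hb (fam3 m A B C) hne hsep {p0 m hm, p1 m hm} {p0 m hm, p2 m hm}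
    rwa [hs01, hs02] at this

end Cases


section Cases2

variable (m : ℕ) (Δ : ℕ → ℕ) (x : ℕ → ℕ) (c : Finset (Fin m) → Finset (Fin m) → Bool)

lemma caseTau (hm : 3 ≤ m) (hb : Bridge m Δ x c) (k : ℕ) (hk : 2 ≤ k)
    (hxd : ∀ n, k ∣ x n)
    (hτ : c {p0 m hm, p1 m hm} {p0 m hm, p1 m hm, p2 m hm} = true) :
    ∀ I : Finset ℕ, I.card = k →
      Δ (∑ i ∈ I, ((x 0 + x 1) / k + x (i + 2))) = Δ (x 0 + x 1) := by
  intro I hI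
  have hsum : ∑ i ∈ I, ((x 0 + x 1) / k + x (i + 2))
      = (x 0 + x 1) + ∑ i ∈ I, x (i + 2) := by
    rw [Finset.sum_add_distrib, Finset.sum_const, hI, smul_eq_mul,
      Nat.mul_div_cancel' (Dvd.dvd.add (hxd 0) (hxd 1))]
  have hIne : I.Nonempty := by rw [← Finset.card_pos, hI]; omega
  have himg : ∑ i ∈ I.image (· + 2), x i = ∑ i ∈ I, x (i + 2) :=
    Finset.sum_image (by intro a _ b _ h; simp only at h; omega)
  obtain ⟨h1, _, _⟩ := bridge3 m Δ x c hm hb {0} {1} (I.image (· + 2))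
    ⟨0, Finset.mem_singleton_self 0⟩ ⟨1, Finset.mem_singleton_self 1⟩ (hIne.image _)
    (by intro a ha b hb'; rw [Finset.mem_singleton] at ha hb'; omega)
    (by intro a ha b hb'; rw [Finset.mem_singleton] at ha; obtain ⟨z, _, rfl⟩ := Finset.mem_image.1 hb'; omega)
    (by intro a ha b hb'; rw [Finset.mem_singleton] at ha; obtain ⟨z, _, rfl⟩ := Finset.mem_image.1 hb'; omega)
  rw [Finset.sum_singleton, Finset.sum_singleton, himg] at h1
  rw [hsum]
  exact (h1.2 hτ).symm

lemma caseMuRed (hm : 3 ≤ m) (hb : Bridge m Δ x c) (k : ℕ) (hk : 2 ≤ k)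
    (hxd : ∀ n, k ∣ x n)
    (hμ : c {p0 m hm, p2 m hm} {p0 m hm, p1 m hm, p2 m hm} = true) :
    ∀ (I : Finset ℕ) (hI : I.card = k),
      Δ (∑ i ∈ I, (x 0 / k + x (i + 1)))
        = Δ (x 0 + x (I.max' (by rw [← Finset.card_pos, hI]; omega) + 1)) := by
  intro I hI
  have hIne : I.Nonempty := by rw [← Finset.card_pos, hI]; omega
  set M := I.max' hIne with hM
  have hMI : M ∈ I := I.max'_mem hIne
  have hsum : ∑ i ∈ I, (x 0 / k + x (i + 1)) = x 0 + ∑ i ∈ I, x (i + 1) := by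
    rw [Finset.sum_add_distrib, Finset.sum_const, hI, smul_eq_mul,
      Nat.mul_div_cancel' (hxd 0)]
  have hsplit : ∑ i ∈ I, x (i + 1) = x (M + 1) + ∑ i ∈ I.erase M, x (i + 1) :=
    (Finset.add_sum_erase I (fun i => x (i + 1)) hMI).symm
  have hEne : (I.erase M).Nonempty := by
    rw [← Finset.card_pos, Finset.card_erase_of_mem hMI, hI]; omega
  have himg : ∑ i ∈ (I.erase M).image (· + 1), x i = ∑ i ∈ I.erase M, x (i + 1) :=
    Finset.sum_image (by intro a _ b _ h; simp only at h; omega)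
  obtain ⟨_, h2, _⟩ := bridge3 m Δ x c hm hb {0} ((I.erase M).image (· + 1)) {M + 1}
    ⟨0, Finset.mem_singleton_self 0⟩ (hEne.image _) ⟨M + 1, Finset.mem_singleton_self _⟩
    (by intro a ha b hb'; rw [Finset.mem_singleton] at ha; obtain ⟨z, _, rfl⟩ := Finset.mem_image.1 hb'; omega)
    (by intro a ha b hb'; rw [Finset.mem_singleton] at ha hb'; omega)
    (by intro a ha b hb'; obtain ⟨z, hz, rfl⟩ := Finset.mem_image.1 ha
        rw [Finset.mem_singleton] at hb'
        obtain ⟨hzne, hzI⟩ := Finset.mem_erase.1 hz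
        have := I.le_max' z hzI
        omega)
  rw [Finset.sum_singleton, Finset.sum_singleton, himg] at h2
  have harg : x 0 + ∑ i ∈ I.erase M, x (i + 1) + x (M + 1)
      = x 0 + ∑ i ∈ I, x (i + 1) := by rw [hsplit]; ring
  rw [harg] at h2
  rw [hsum]
  exact (h2.2 hμ).symm

lemma caseDelta (hm : 3 ≤ m) (hb : Bridge m Δ x c) (a b : ℕ) (ha : 1 ≤ a) (hab : a < b) :
    (Δ (x 0 + x a) = Δ (x 0 + x b)) ↔
      c {p0 m hm, p1 m hm} {p0 m hm, p2 m hm} = true := by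
  obtain ⟨_, _, h3⟩ := bridge3 m Δ x c hm hb {0} {a} {b}
    ⟨0, Finset.mem_singleton_self 0⟩ ⟨a, Finset.mem_singleton_self a⟩
    ⟨b, Finset.mem_singleton_self b⟩
    (by intro u hu v hv; rw [Finset.mem_singleton] at hu hv; omega)
    (by intro u hu v hv; rw [Finset.mem_singleton] at hu hv; omega)
    (by intro u hu v hv; rw [Finset.mem_singleton] at hu hv; omega)
  rw [Finset.sum_singleton, Finset.sum_singleton, Finset.sum_singleton] at h3
  exact h3

end Cases2


section Cases3

variable (m : ℕ) (Δ : ℕ → ℕ) (x : ℕ → ℕ) (c : Finset (Fin m) → Finset (Fin m) → Bool)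

lemma caseInj (k : ℕ) (hk : 2 ≤ k) (hm3 : 3 ≤ m) (hm : 2 * k + 2 ≤ m)
    (hb : Bridge m Δ x c)
    (hτ : ¬ c {p0 m hm3, p1 m hm3} {p0 m hm3, p1 m hm3, p2 m hm3} = true)
    (hμ : ¬ c {p0 m hm3, p2 m hm3} {p0 m hm3, p1 m hm3, p2 m hm3} = true)
    (I J : Finset ℕ) (hI : I.card = k) (hJ : J.card = k) (hne : I ≠ J)
    (heq : Δ (∑ i ∈ I, x i) = Δ (∑ i ∈ J, x i)) : False := by
  have hIne : I.Nonempty := by rw [← Finset.card_pos, hI]; omega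
  have hJne : J.Nonempty := by rw [← Finset.card_pos, hJ]; omega
  have hIJ : ¬ I ⊆ J := fun hsub => hne (Finset.eq_of_subset_of_card_le hsub (by omega))
  obtain ⟨i, hiI, hiJ⟩ := Finset.not_subset.1 hIJ
  have hcard : (I ∪ J).card ≤ m := le_trans (Finset.card_union_le I J) (by omega)
  have ht4 := E_transfer m Δ x c hb I J hIne hJne hcard (fun z => 4 * z)
    (by intro a _ b _ h; omega)
  set I4 := I.image (fun z => 4 * z) with hI4def
  set J4 := J.image (fun z => 4 * z) with hJ4def
  have heq4 : Δ (∑ i ∈ I4, x i) = Δ (∑ i ∈ J4, x i) := ht4.1 heq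
  set i4 := 4 * i with hi4def
  have hi4I : i4 ∈ I4 := Finset.mem_image_of_mem _ hiI
  have hi4J : i4 ∉ J4 := by
    intro hmem
    obtain ⟨a, haJ, ha⟩ := Finset.mem_image.1 hmem
    have : a = i := by omega
    exact hiJ (this ▸ haJ)
  have hmul : ∀ a, a ∈ I4 ∨ a ∈ J4 → 4 ∣ a := by
    intro a ha
    rcases ha with h | h <;>
    · obtain ⟨z, _, rfl⟩ := Finset.mem_image.1 h
      exact ⟨z, rfl⟩
  have hI4ne : I4.Nonempty := hIne.image _
  have hJ4ne : J4.Nonempty := hJne.image _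
  have hcard4 : (I4 ∪ J4).card ≤ m := by
    have h1 := Finset.card_union_le I4 J4
    have h2 : I4.card ≤ I.card := Finset.card_image_le
    have h3 : J4.card ≤ J.card := Finset.card_image_le
    omega
  set θs := fun z => if z = i4 then i4 + 1 else z with hθdef
  have ht5 := E_transfer m Δ x c hb I4 J4 hI4ne hJ4ne hcard4 θs (by
    intro a ha b hb' hab
    simp only [hθdef]
    by_cases ha4 : a = i4
    · subst ha4
      rw [if_pos rfl, if_neg (by omega)]
      obtain ⟨u, hu⟩ := hmul b (by rwa [← Finset.mem_union])
      omega
    · rw [if_neg ha4]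
      by_cases hb4 : b = i4
      · subst hb4
        rw [if_pos rfl]
        omega
      · rw [if_neg hb4]
        exact hab)
  set C := I4.erase i4 with hCdef
  set I5 := insert (i4 + 1) C with hI5def
  have hi41C : i4 + 1 ∉ C := by
    intro hmem
    have := hmul (i4 + 1) (Or.inl (Finset.mem_of_mem_erase hmem))
    obtain ⟨u, hu⟩ := this
    omega
  have him5 : I4.image θs = I5 := by
    conv_lhs => rw [← Finset.insert_erase hi4I]
    rw [Finset.image_insert]
    have h0 : θs i4 = i4 + 1 := by simp [hθdef]
    rw [h0, ← hCdef]
    congr 1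
    have : Set.EqOn θs id ↑C := by
      intro a ha
      simp only [Finset.mem_coe, hCdef, Finset.mem_erase] at ha
      simp [hθdef, ha.1]
    rw [Finset.image_congr this, Finset.image_id]
  have himJ : J4.image θs = J4 := by
    have : Set.EqOn θs id ↑J4 := by
      intro a ha
      simp only [Finset.mem_coe] at ha
      have : a ≠ i4 := fun hcon => hi4J (hcon ▸ ha)
      simp [hθdef, this]
    rw [Finset.image_congr this, Finset.image_id]
  have heq5 : Δ (∑ i ∈ I5, x i) = Δ (∑ i ∈ J4, x i) := by
    have h := ht5.1 heq4
    rwa [him5, himJ] at h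
  have hE45 : Δ (∑ i ∈ I4, x i) = Δ (∑ i ∈ I5, x i) := heq4.trans heq5.symm
  set W := I4 ∪ I5 with hWdef
  have hi41W : i4 + 1 ∈ W := Finset.mem_union_right _ (Finset.mem_insert_self _ _)
  have hWne : W.Nonempty := ⟨i4 + 1, hi41W⟩
  have hWcard : W.card ≤ m := by
    have h1 : W.card ≤ I4.card + I5.card := by
      rw [hWdef]
      exact Finset.card_union_le _ _
    have h2 : I4.card ≤ I.card := Finset.card_image_le
    have h3 : I5.card ≤ C.card + 1 := by
      rw [hI5def]
      exact Finset.card_insert_le _ _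
    have h4 : C.card ≤ I4.card := by
      rw [hCdef]
      exact Finset.card_erase_le
    omega
  have hWelem : ∀ a ∈ W, a = i4 + 1 ∨ 4 ∣ a := by
    intro a ha
    rcases Finset.mem_union.1 ha with h | h
    · exact Or.inr (hmul a (Or.inl h))
    · rcases Finset.mem_insert.1 h with h' | h'
      · exact Or.inl h'
      · exact Or.inr (hmul a (Or.inl (Finset.mem_of_mem_erase h')))
  have hi42W : i4 + 2 ∉ W := by
    intro hmem
    rcases hWelem _ hmem with h | h
    · omega
    · obtain ⟨u, hu⟩ := h
      omega
  have hsupW : i4 + 1 ≤ W.sup id := Finset.le_sup (f := id) hi41W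
  have hQ : c (posIJ m W I4) (posIJ m W I5) = true :=
    (E_iff_Q m Δ x c hb I4 I5 hI4ne (Finset.insert_nonempty _ _) hWcard).1 hE45
  set b' : Fin m → Finset ℕ :=
    fun r => if embIJ m W r = i4 + 1 then ({i4 + 1, i4 + 2} : Finset ℕ) else {embIJ m W r}
    with hb'def
  have hembne2 : ∀ r : Fin m, embIJ m W r ≠ i4 + 2 := by
    intro r
    by_cases hr : (r : ℕ) < W.card
    · intro hcon
      apply hi42W
      rw [← hcon]
      exact embIJ_mem m hr
    · rw [embIJ, dif_neg hr]
      have hc1 : 1 ≤ W.card := Finset.card_pos.2 hWne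
      omega
  have hb'ne : ∀ r, (b' r).Nonempty := by
    intro r
    rw [hb'def]
    dsimp only
    split_ifs
    · exact ⟨i4 + 1, Finset.mem_insert_self _ _⟩
    · exact ⟨_, Finset.mem_singleton_self _⟩
  have hb'elem : ∀ r : Fin m, ∀ a ∈ b' r,
      a = embIJ m W r ∨ (embIJ m W r = i4 + 1 ∧ a = i4 + 2) := by
    intro r a ha
    rw [hb'def] at ha
    dsimp only at ha
    split_ifs at ha with h
    · rcases Finset.mem_insert.1 ha with h' | h'
      · left
        omega
      · right
        exact ⟨h, Finset.mem_singleton.1 h'⟩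
    · left
      exact Finset.mem_singleton.1 ha
  have hb'sep : ∀ r1 r2 : Fin m, r1 < r2 → ∀ a ∈ b' r1, ∀ b ∈ b' r2, a < b := by
    intro r1 r2 h12 a ha b hb2
    have hlt := embIJ_sep m W r1 r2 h12
    have hne2 := hembne2 r2
    rcases hb'elem r1 a ha with h1 | ⟨h1e, h1a⟩ <;>
      rcases hb'elem r2 b hb2 with h2 | ⟨h2e, h2a⟩ <;> omega
  have hiff := hb b' hb'ne hb'sep (posIJ m W I4) (posIJ m W I5)
  have heq'' : Δ (∑ r ∈ posIJ m W I4, ∑ i ∈ b' r, x i)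
      = Δ (∑ r ∈ posIJ m W I5, ∑ i ∈ b' r, x i) := hiff.2 hQ
  have hi41I4 : i4 + 1 ∉ I4 := by
    intro hmem
    obtain ⟨u, hu⟩ := hmul _ (Or.inl hmem)
    omega
  have hS1 : ∑ r ∈ posIJ m W I4, ∑ i ∈ b' r, x i = ∑ i ∈ I4, x i := by
    rw [← sum_posIJ m x W I4 Finset.subset_union_left hWcard]
    apply Finset.sum_congr rfl
    intro r hr
    have hrI : embIJ m W r ∈ I4 := (Finset.mem_filter.1 hr).2
    rw [hb'def]
    dsimp only
    rw [if_neg (by intro hcon; apply hi41I4; rw [← hcon]; exact hrI), Finset.sum_singleton]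
  obtain ⟨rstar, hrstar_lt, hrstar⟩ := embIJ_surj m hWcard hi41W
  have hrstar_mem : rstar ∈ posIJ m W I5 := by
    rw [posIJ, Finset.mem_filter]
    exact ⟨Finset.mem_univ _, by rw [hrstar]; exact Finset.mem_insert_self _ _⟩
  have hS2 : ∑ r ∈ posIJ m W I5, ∑ i ∈ b' r, x i = (∑ i ∈ I5, x i) + x (i4 + 2) := by
    have hpt : ∀ r ∈ posIJ m W I5, ∑ i ∈ b' r, x i
        = x (embIJ m W r) + (if r = rstar then x (i4 + 2) else 0) := by
      intro r _
      rw [hb'def]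
      dsimp only
      by_cases h : embIJ m W r = i4 + 1
      · have hrr : r = rstar := by
          by_contra hner
          rcases lt_or_gt_of_ne hner with hlt | hlt
          · have := embIJ_sep m W _ _ hlt
            omega
          · have := embIJ_sep m W _ _ hlt
            omega
        rw [if_pos h, if_pos hrr, Finset.sum_pair (by omega), h]
      · have hrr : r ≠ rstar := fun hcon => h (hcon ▸ hrstar)
        rw [if_neg h, if_neg hrr, Finset.sum_singleton, add_zero]
    rw [Finset.sum_congr rfl hpt, Finset.sum_add_distrib,
      sum_posIJ m x W I5 Finset.subset_union_right hWcard,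
      Finset.sum_ite_eq' (posIJ m W I5) rstar (fun _ => x (i4 + 2)), if_pos hrstar_mem]
  rw [hS1, hS2] at heq''
  have hstar : Δ (∑ i ∈ I5, x i) = Δ ((∑ i ∈ I5, x i) + x (i4 + 2)) :=
    hE45.symm.trans heq''
  have hI4card : I4.card = k := by
    rw [hI4def, Finset.card_image_of_injective _
      (show Function.Injective (fun z => 4 * z) by intro a b h; simp only at h; omega), hI]
  have hCcard : C.card = k - 1 := by
    rw [hCdef, Finset.card_erase_of_mem hi4I, hI4card]
  have hCne : C.Nonempty := by
    rw [← Finset.card_pos, hCcard]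
    omega
  have hCmem : ∀ a ∈ C, a ≠ i4 ∧ 4 ∣ a := fun a ha =>
    ⟨(Finset.mem_erase.1 ha).1, hmul a (Or.inl (Finset.mem_of_mem_erase ha))⟩
  have hsumI5 : ∑ i ∈ I5, x i = x (i4 + 1) + ∑ i ∈ C, x i := Finset.sum_insert hi41C
  set Chigh := C.filter (fun a => i4 < a) with hChighdef
  set Clow := C.filter (fun a => a < i4) with hClowdef
  have hdisj : Disjoint Clow Chigh := by
    rw [Finset.disjoint_left]
    intro a ha ha'
    rw [hClowdef, Finset.mem_filter] at ha
    rw [hChighdef, Finset.mem_filter] at ha'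
    omega
  have hunion : Clow ∪ Chigh = C := by
    ext a
    simp only [Finset.mem_union, hClowdef, hChighdef, Finset.mem_filter]
    constructor
    · rintro (⟨h, _⟩ | ⟨h, _⟩) <;> exact h
    · intro ha
      have := (hCmem a ha).1
      rcases Nat.lt_or_ge a i4 with h | h
      · exact Or.inl ⟨ha, h⟩
      · exact Or.inr ⟨ha, by omega⟩
  have hCsplit : ∑ i ∈ Clow, x i + ∑ i ∈ Chigh, x i = ∑ i ∈ C, x i := by
    rw [← Finset.sum_union hdisj, hunion]
  by_cases hChne : Chigh.Nonempty
  · -- middle-absorption pattern: contradiction with hμ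
    have hClow1 : i4 + 1 ∉ Clow := by
      intro hmem
      rw [hClowdef, Finset.mem_filter] at hmem
      omega
    obtain ⟨_, h2, _⟩ := bridge3 m Δ x c hm3 hb (insert (i4 + 1) Clow) {i4 + 2} Chigh
      (Finset.insert_nonempty _ _) ⟨_, Finset.mem_singleton_self _⟩ hChne
      (by
        intro a ha b hb'
        rw [Finset.mem_singleton] at hb'
        rcases Finset.mem_insert.1 ha with h | h
        · omega
        · rw [hClowdef, Finset.mem_filter] at h
          omega)
      (by
        intro a ha b hb'
        rw [hChighdef, Finset.mem_filter] at hb'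
        obtain ⟨hbC, hbgt⟩ := hb'
        obtain ⟨u, hu⟩ := (hCmem b hbC).2
        rcases Finset.mem_insert.1 ha with h | h
        · omega
        · rw [hClowdef, Finset.mem_filter] at h
          omega)
      (by
        intro a ha b hb'
        rw [Finset.mem_singleton] at ha
        rw [hChighdef, Finset.mem_filter] at hb'
        obtain ⟨hbC, hbgt⟩ := hb'
        obtain ⟨u, hu⟩ := (hCmem b hbC).2
        omega)
    apply hμ
    apply h2.1
    have hA : ∑ i ∈ insert (i4 + 1) Clow, x i = x (i4 + 1) + ∑ i ∈ Clow, x i :=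
      Finset.sum_insert hClow1
    have e1 : ∑ i ∈ insert (i4 + 1) Clow, x i + ∑ i ∈ Chigh, x i = ∑ i ∈ I5, x i := by
      rw [hA, hsumI5, ← hCsplit]
      ring
    have e2 : ∑ i ∈ insert (i4 + 1) Clow, x i + ∑ i ∈ ({i4 + 2} : Finset ℕ), x i
        + ∑ i ∈ Chigh, x i = (∑ i ∈ I5, x i) + x (i4 + 2) := by
      rw [Finset.sum_singleton, hA, hsumI5, ← hCsplit]
      ring
    rw [e1, e2]
    exact hstar
  · -- top-absorption pattern: contradiction with hτ
    have hClt : ∀ a ∈ C, a < i4 := by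
      intro a ha
      by_contra hge
      apply hChne
      refine ⟨a, ?_⟩
      rw [hChighdef, Finset.mem_filter]
      have := (hCmem a ha).1
      exact ⟨ha, by omega⟩
    obtain ⟨h1, _, _⟩ := bridge3 m Δ x c hm3 hb C {i4 + 1} {i4 + 2} hCne
      ⟨_, Finset.mem_singleton_self _⟩ ⟨_, Finset.mem_singleton_self _⟩
      (by
        intro a ha b hb'
        rw [Finset.mem_singleton] at hb'
        have := hClt a ha
        omega)
      (by
        intro a ha b hb'
        rw [Finset.mem_singleton] at hb'
        have := hClt a ha
        omega)
      (by
        intro a ha b hb'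
        rw [Finset.mem_singleton] at ha hb'
        omega)
    apply hτ
    apply h1.1
    simp only [Finset.sum_singleton]
    have e1 : ∑ i ∈ C, x i + x (i4 + 1) = ∑ i ∈ I5, x i := by
      rw [hsumI5]
      ring
    rw [e1]
    exact hstar

end Cases3


lemma FS_closed {S : Set ℕ} (hadd : ∀ a b : ℕ, a ∈ S → b ∈ S → a + b ∈ S) :
    ∀ (b : Stream' ℕ) (z : ℕ), z ∈ Hindman.FS b → (∀ n, b.get n ∈ S) → z ∈ S := by
  intro b z hz
  induction hz with
  | head' c => intro hc; exact hc 0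
  | tail' c mm h ih => intro hc; exact ih (fun n => hc (n + 1))
  | cons' c mm h ih => intro hc; exact hadd _ _ (hc 0) (ih (fun n => hc (n + 1)))

theorem main (k : ℕ) (hk : 2 ≤ k) (Δ : ℕ → ℕ) :
    ∃ x : ℕ → ℕ, StrictMono x ∧ (∀ n, 0 < x n) ∧
      ((∀ I J : Finset ℕ, I.card = k → J.card = k →
          Δ (∑ i ∈ I, x i) = Δ (∑ j ∈ J, x j)) ∨
       (∀ I J : Finset ℕ, I.card = k → J.card = k →
          (Δ (∑ i ∈ I, x i) = Δ (∑ j ∈ J, x j) ↔ I = J)) ∨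
       (∀ I J : Finset ℕ, I.card = k → J.card = k →
          (Δ (∑ i ∈ I, x i) = Δ (∑ j ∈ J, x j) ↔ I.max = J.max))) := by
  classical
  set m := 2 * k + 2 with hmdef
  have hm3 : 3 ≤ m := by omega
  set P : Set ℕ := {n | 0 < n ∧ k ∣ n} with hPdef
  obtain ⟨U, hU, hFS⟩ := Hindman.exists_idempotent_ultrafilter_le_FS
    (fun n => k * 2 ^ n : Stream' ℕ)
  have hP : P ∈ U := by
    apply Filter.mem_of_superset hFS
    intro z hz
    exact FS_closed (S := P)
      (by
        rintro a b ⟨ha1, ha2⟩ ⟨hb1, hb2⟩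
        exact ⟨by omega, Dvd.dvd.add ha2 hb2⟩)
      (fun n => k * 2 ^ n) z hz
      (fun n => ⟨Nat.mul_pos (by omega) (pow_pos (by norm_num) n), Dvd.intro _ rfl⟩)
  have hP0 : (0 : ℕ) ∉ P := by
    rw [hPdef]
    simp
  set χ : List ℕ → (Finset (Fin m) → Finset (Fin m) → Bool) :=
    fun v e f =>
      decide (Δ (∑ r ∈ e, v.getD (r : ℕ) 0) = Δ (∑ r ∈ f, v.getD (r : ℕ) 0)) with hχdef
  obtain ⟨x, hxmono, hxP, c, hχc⟩ := MT_main U m χ hU P hP hP0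
  have hxpos : ∀ n, 0 < x n := fun n => (hxP n).1
  have hxd : ∀ n, k ∣ x n := fun n => (hxP n).2
  have hgd : ∀ (u : Fin m → ℕ) (r : Fin m), (List.ofFn u).getD (r : ℕ) 0 = u r := by
    intro u r
    rw [List.getD_eq_getElem?_getD, List.getElem?_ofFn]
    simp [List.ofFnNthVal, r.isLt]
  have hb : Bridge m Δ x c := by
    intro g hne hsep e f
    have h := hχc g hne hsep
    have h2 := congrFun (congrFun h e) f
    rw [hχdef] at h2
    simp only at h2
    rw [← h2]
    constructor
    · intro hEq
      apply decide_eq_true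
      calc Δ (∑ r ∈ e, (List.ofFn fun r => ∑ i ∈ g r, x i).getD (r : ℕ) 0)
          = Δ (∑ r ∈ e, ∑ i ∈ g r, x i) := by
            congr 1
            exact Finset.sum_congr rfl (fun r _ => hgd _ r)
        _ = Δ (∑ r ∈ f, ∑ i ∈ g r, x i) := hEq
        _ = Δ (∑ r ∈ f, (List.ofFn fun r => ∑ i ∈ g r, x i).getD (r : ℕ) 0) := by
            congr 1
            exact Finset.sum_congr rfl (fun r _ => (hgd (fun r => ∑ i ∈ g r, x i) r).symm)
    · intro hEq
      have h3 := of_decide_eq_true hEq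
      calc Δ (∑ r ∈ e, ∑ i ∈ g r, x i)
          = Δ (∑ r ∈ e, (List.ofFn fun r => ∑ i ∈ g r, x i).getD (r : ℕ) 0) := by
            congr 1
            exact Finset.sum_congr rfl (fun r _ => (hgd (fun r => ∑ i ∈ g r, x i) r).symm)
        _ = Δ (∑ r ∈ f, (List.ofFn fun r => ∑ i ∈ g r, x i).getD (r : ℕ) 0) := h3
        _ = Δ (∑ r ∈ f, ∑ i ∈ g r, x i) := by
            congr 1
            exact Finset.sum_congr rfl (fun r _ => hgd _ r)
  by_cases hτ : c {p0 m hm3, p1 m hm3} {p0 m hm3, p1 m hm3, p2 m hm3} = true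
  · -- constant case via top absorption
    refine ⟨fun i => (x 0 + x 1) / k + x (i + 2), ?_, ?_, Or.inl ?_⟩
    · intro a b hab
      exact Nat.add_lt_add_left (hxmono (by omega)) _
    · intro n
      have := hxpos (n + 2)
      exact lt_of_lt_of_le this (Nat.le_add_left _ _)
    · intro I J hI hJ
      have h1 := caseTau m Δ x c hm3 hb k hk hxd hτ I hI
      have h2 := caseTau m Δ x c hm3 hb k hk hxd hτ J hJ
      exact h1.trans h2.symm
  · by_cases hμ : c {p0 m hm3, p2 m hm3} {p0 m hm3, p1 m hm3, p2 m hm3} = true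
    · -- min/minmax cases
      by_cases hδ : c {p0 m hm3, p1 m hm3} {p0 m hm3, p2 m hm3} = true
      · -- constant case
        refine ⟨fun i => x 0 / k + x (i + 1), ?_, ?_, Or.inl ?_⟩
        · intro a b hab
          exact Nat.add_lt_add_left (hxmono (by omega)) _
        · intro n
          have := hxpos (n + 1)
          exact lt_of_lt_of_le this (Nat.le_add_left _ _)
        · intro I J hI hJ
          have hIne : I.Nonempty := by rw [← Finset.card_pos, hI]; omega
          have hJne : J.Nonempty := by rw [← Finset.card_pos, hJ]; omega
          have h1 := caseMuRed m Δ x c hm3 hb k hk hxd hμ I hI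
          have h2 := caseMuRed m Δ x c hm3 hb k hk hxd hμ J hJ
          have h3 : Δ (x 0 + x (I.max' hIne + 1)) = Δ (x 0 + x (J.max' hJne + 1)) := by
            rcases lt_trichotomy (I.max' hIne) (J.max' hJne) with h | h | h
            · exact (caseDelta m Δ x c hm3 hb _ _ (by omega) (by omega)).2 hδ
            · rw [h]
            · exact ((caseDelta m Δ x c hm3 hb _ _ (by omega) (by omega)).2 hδ).symm
          exact h1.trans (h3.trans h2.symm)
      · -- max case
        refine ⟨fun i => x 0 / k + x (i + 1), ?_, ?_, Or.inr (Or.inr ?_)⟩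
        · intro a b hab
          exact Nat.add_lt_add_left (hxmono (by omega)) _
        · intro n
          have := hxpos (n + 1)
          exact lt_of_lt_of_le this (Nat.le_add_left _ _)
        · intro I J hI hJ
          have hIne : I.Nonempty := by rw [← Finset.card_pos, hI]; omega
          have hJne : J.Nonempty := by rw [← Finset.card_pos, hJ]; omega
          have h1 := caseMuRed m Δ x c hm3 hb k hk hxd hμ I hI
          have h2 := caseMuRed m Δ x c hm3 hb k hk hxd hμ J hJ
          have hmaxI : I.max = ((I.max' hIne : ℕ) : WithBot ℕ) := (Finset.coe_max' hIne).symm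
          have hmaxJ : J.max = ((J.max' hJne : ℕ) : WithBot ℕ) := (Finset.coe_max' hJne).symm
          constructor
          · intro hEq
            have h3 : Δ (x 0 + x (I.max' hIne + 1)) = Δ (x 0 + x (J.max' hJne + 1)) :=
              h1.symm.trans (hEq.trans h2)
            have h4 : I.max' hIne = J.max' hJne := by
              by_contra hne
              rcases lt_or_gt_of_ne hne with h | h
              · exact hδ ((caseDelta m Δ x c hm3 hb _ _ (by omega) (by omega)).1 h3)
              · exact hδ ((caseDelta m Δ x c hm3 hb _ _ (by omega) (by omega)).1 h3.symm)
            rw [hmaxI, hmaxJ, h4]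
          · intro hEq
            have h4 : I.max' hIne = J.max' hJne := by
              rw [hmaxI, hmaxJ] at hEq
              exact_mod_cast hEq
            rw [h4] at h1
            exact h1.trans h2.symm
    · -- injective case
      refine ⟨x, hxmono, hxpos, Or.inr (Or.inl ?_)⟩
      intro I J hI hJ
      constructor
      · intro hEq
        by_contra hne
        exact caseInj m Δ x c k hk hm3 (le_refl _) hb hτ hμ I J hI hJ hne hEq
      · intro hEq
        rw [hEq]


end Stmt15

theorem stmt_15 (k : ℕ) (hk : 2 ≤ k) (Δ : ℕ → ℕ) :
    ∃ x : ℕ → ℕ, StrictMono x ∧ (∀ n, 0 < x n) ∧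
      ((∀ I J : Finset ℕ, I.card = k → J.card = k →
          Δ (∑ i ∈ I, x i) = Δ (∑ j ∈ J, x j)) ∨
       (∀ I J : Finset ℕ, I.card = k → J.card = k →
          (Δ (∑ i ∈ I, x i) = Δ (∑ j ∈ J, x j) ↔ I = J)) ∨
       (∀ I J : Finset ℕ, I.card = k → J.card = k →
          (Δ (∑ i ∈ I, x i) = Δ (∑ j ∈ J, x j) ↔ I.max = J.max))) :=
  Stmt15.main k hk Δ
end

section
/- Suppose for every coloring Δ': P'(ℕ) → ℕ of finite non-empty subsets of ℕ there exist finite sets B_1 < B_2 < ... satisfying one of Taylor's five canonical patterns on finite unions. Fix odd k ≥ 3 and set x_j = Σ_{t ∈ B_1 ∪ ... ∪ B_j} 2^t. Then for every k-element index set J = {j_1 < ... < j_k}, the alternating sum x_{j_k} - x_{j_{k-1}} + ... + x_{j_3} - x_{j_2} + x_{j_1} equals Σ_{t ∈ B_{J_alt}} 2^t, where J_alt = {1, ..., j_1} ∪ {j_2+1, ..., j_3} ∪ {j_4+1, ..., j_5} ∪ ... ∪ {j_{k-1}+1, ..., j_k} and B_{J_alt} = ∪_{i ∈ J_alt} B_i.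 -/
lemma alt_sum_telescope (g : ℕ → ℤ) : ∀ n : ℕ,
    ∑ m ∈ Finset.Icc 1 (2 * n + 1), (-1 : ℤ) ^ (2 * n + 1 - m) * g m =
      g 1 + ∑ ℓ ∈ Finset.Icc 1 n, (g (2 * ℓ + 1) - g (2 * ℓ)) := by
  intro n
  induction n with
  | zero => simp
  | succ n ih =>
    have hsplit : Finset.Icc 1 (2 * (n + 1) + 1) =
        Finset.Icc 1 (2 * n + 1) ∪ {2 * n + 2, 2 * n + 3} := by
      ext t; simp [Finset.mem_Icc, Finset.mem_union]; omega
    have hd : Disjoint (Finset.Icc 1 (2 * n + 1)) ({2 * n + 2, 2 * n + 3} : Finset ℕ) := by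
      rw [Finset.disjoint_left]
      intro t ht ht'
      simp [Finset.mem_Icc] at ht ht'
      omega
    rw [hsplit, Finset.sum_union hd]
    have h1 : ∑ m ∈ Finset.Icc 1 (2 * n + 1), (-1 : ℤ) ^ (2 * (n + 1) + 1 - m) * g m =
        ∑ m ∈ Finset.Icc 1 (2 * n + 1), (-1 : ℤ) ^ (2 * n + 1 - m) * g m := by
      apply Finset.sum_congr rfl
      intro m hm
      simp only [Finset.mem_Icc] at hm
      have : 2 * (n + 1) + 1 - m = (2 * n + 1 - m) + 2 := by omega
      rw [this, pow_add]
      ring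
    have h2 : Finset.Icc 1 (n + 1) = Finset.Icc 1 n ∪ {n + 1} := by
      ext t; simp [Finset.mem_Icc]; omega
    have hd2 : Disjoint (Finset.Icc 1 n) ({n + 1} : Finset ℕ) := by
      rw [Finset.disjoint_left]; intro t ht ht'
      simp [Finset.mem_Icc] at ht ht'; omega
    rw [h1, ih, h2, Finset.sum_union hd2]
    have e1 : 2 * (n + 1) + 1 - (2 * n + 2) = 1 := by omega
    have e2 : 2 * (n + 1) + 1 - (2 * n + 3) = 0 := by omega
    simp [e1, e2]
    ring_nf

theorem stmt_16 (B : ℕ → Finset ℕ) (hne : ∀ i, (B i).Nonempty)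
    (hord : ∀ i j, i < j → ∀ a ∈ B i, ∀ b ∈ B j, a < b)
    (k : ℕ) (hk : 3 ≤ k) (hko : Odd k)
    (j : ℕ → ℕ) (hj1 : 1 ≤ j 1)
    (hjmono : ∀ a b, 1 ≤ a → a < b → b ≤ k → j a < j b) :
    let x : ℕ → ℕ := fun m => ∑ t ∈ (Finset.Icc 1 m).biUnion B, 2 ^ t
    let Jalt : Finset ℕ :=
      Finset.Icc 1 (j 1) ∪
        (Finset.Icc 1 ((k - 1) / 2)).biUnion fun ℓ =>
          Finset.Icc (j (2 * ℓ) + 1) (j (2 * ℓ + 1))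
    (∑ m ∈ Finset.Icc 1 k, (-1 : ℤ) ^ (k - m) * x (j m)) =
      ∑ t ∈ Jalt.biUnion B, (2 : ℤ) ^ t := by
  intro x Jalt
  obtain ⟨n, hkn⟩ : ∃ n, k = 2 * n + 1 := by
    obtain ⟨m, hm⟩ := hko; exact ⟨m, by omega⟩
  have hn : 1 ≤ n := by omega
  set S : ℕ → ℤ := fun i => ∑ t ∈ B i, (2 : ℤ) ^ t with hS
  have hdisj : ∀ i i', i ≠ i' → Disjoint (B i) (B i') := by
    intro i i' hii
    rw [Finset.disjoint_left]
    intro a hai hai'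
    rcases Nat.lt_or_ge i i' with h | h
    · exact absurd (hord i i' h a hai a hai') (lt_irrefl a)
    · have h' : i' < i := by omega
      exact absurd (hord i' i h' a hai' a hai) (lt_irrefl a)
  have hBU : ∀ I : Finset ℕ, ∑ t ∈ I.biUnion B, (2 : ℤ) ^ t = ∑ i ∈ I, S i := by
    intro I
    rw [Finset.sum_biUnion]
    intro i _ i' _ hii
    exact hdisj i i' hii
  set A : ℕ → ℤ := fun m => ∑ i ∈ Finset.Icc 1 m, S i with hA
  have hx : ∀ m, (x m : ℤ) = A m := by
    intro m
    simp only [x, hA]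
    push_cast
    exact hBU _
  have hdiff : ∀ a b : ℕ, a ≤ b →
      ∑ i ∈ Finset.Icc (a + 1) b, S i = A b - A a := by
    intro a b hab
    have hsp : Finset.Icc 1 b = Finset.Icc 1 a ∪ Finset.Icc (a + 1) b := by
      ext t; simp [Finset.mem_Icc, Finset.mem_union]; omega
    have hd : Disjoint (Finset.Icc 1 a) (Finset.Icc (a + 1) b) := by
      rw [Finset.disjoint_left]; intro t ht ht'
      simp [Finset.mem_Icc] at ht ht'; omega
    simp only [hA]
    rw [hsp, Finset.sum_union hd]
    ring
  -- LHS
  have hL : (∑ m ∈ Finset.Icc 1 k, (-1 : ℤ) ^ (k - m) * x (j m)) =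
      A (j 1) + ∑ ℓ ∈ Finset.Icc 1 n, (A (j (2 * ℓ + 1)) - A (j (2 * ℓ))) := by
    have := alt_sum_telescope (fun m => A (j m)) n
    calc ∑ m ∈ Finset.Icc 1 k, (-1 : ℤ) ^ (k - m) * x (j m)
        = ∑ m ∈ Finset.Icc 1 (2 * n + 1), (-1 : ℤ) ^ (2 * n + 1 - m) * A (j m) := by
          rw [hkn]; exact Finset.sum_congr rfl fun m _ => by rw [hx]
      _ = _ := this
  rw [hL, hBU]
  -- RHS
  have hkn2 : (k - 1) / 2 = n := by omega
  have hdUnion : Disjoint (Finset.Icc 1 (j 1))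
      ((Finset.Icc 1 ((k - 1) / 2)).biUnion fun ℓ =>
        Finset.Icc (j (2 * ℓ) + 1) (j (2 * ℓ + 1))) := by
    rw [Finset.disjoint_left]
    intro t ht ht'
    simp only [Finset.mem_biUnion, Finset.mem_Icc] at ht ht'
    obtain ⟨ℓ, hℓ, ht1, ht2⟩ := ht'
    rw [hkn2] at hℓ
    have : j 1 < j (2 * ℓ) := hjmono 1 (2 * ℓ) (le_refl 1) (by omega) (by omega)
    omega
  have hpd : ∀ ℓ ∈ Finset.Icc 1 ((k - 1) / 2), ∀ ℓ' ∈ Finset.Icc 1 ((k - 1) / 2), ℓ ≠ ℓ' →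
      Disjoint (Finset.Icc (j (2 * ℓ) + 1) (j (2 * ℓ + 1)))
        (Finset.Icc (j (2 * ℓ') + 1) (j (2 * ℓ' + 1))) := by
    intro ℓ hℓ ℓ' hℓ' hne'
    simp only [Finset.mem_Icc, hkn2] at hℓ hℓ'
    rw [Finset.disjoint_left]
    intro t ht ht'
    simp only [Finset.mem_Icc] at ht ht'
    rcases Nat.lt_or_ge ℓ ℓ' with h | h
    · have : j (2 * ℓ + 1) < j (2 * ℓ') := hjmono _ _ (by omega) (by omega) (by omega)
      omega
    · have h' : ℓ' < ℓ := by omega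
      have : j (2 * ℓ' + 1) < j (2 * ℓ) := hjmono _ _ (by omega) (by omega) (by omega)
      omega
  simp only [Jalt]
  rw [Finset.sum_union hdUnion, Finset.sum_biUnion hpd, hkn2]
  have : ∀ ℓ ∈ Finset.Icc 1 n,
      ∑ i ∈ Finset.Icc (j (2 * ℓ) + 1) (j (2 * ℓ + 1)), S i =
        A (j (2 * ℓ + 1)) - A (j (2 * ℓ)) := by
    intro ℓ hℓ
    simp only [Finset.mem_Icc] at hℓ
    exact hdiff _ _ (le_of_lt (hjmono _ _ (by omega) (by omega) (by omega)))
  rw [Finset.sum_congr rfl this]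
end

section
/- Let k ≥ 2 be fixed, Δ: ℕ → ℕ a coloring, and z_0 < z_1 < z_2 < ... positive integers all divisible by k such that the family of all finite sums of the z_i satisfies the min-colored pattern: Δ(Σ_{i∈I} z_i) = Δ(Σ_{j∈J} z_j) iff min I = min J for all finite non-empty I, J. Define x_i = z_0/k + z_i for i ≥ 1. Then all k-term sums of the x_i are monochromatic: for every k-element set S ⊆ {1, 2, ...}, Σ_{i∈S} x_i = z_0 + Σ_{i∈S} z_i, and hence Δ(Σ_{i∈S} x_i) is the same for all such S. -/
theorem stmt_18 (k : ℕ) (hk : 2 ≤ k) (Δ : ℕ → ℕ)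
    (z : ℕ → ℕ) (hmono : StrictMono z) (hpos : ∀ n, 0 < z n)
    (hdvd : ∀ n, k ∣ z n)
    (hmin : ∀ I J : Finset ℕ, I.Nonempty → J.Nonempty →
      (Δ (∑ i ∈ I, z i) = Δ (∑ j ∈ J, z j) ↔ I.min = J.min)) :
    let x : ℕ → ℕ := fun i => z 0 / k + z i
    (∀ S : Finset ℕ, 0 ∉ S → S.card = k →
      (∑ i ∈ S, x i) = z 0 + ∑ i ∈ S, z i) ∧
    ∀ S S' : Finset ℕ, 0 ∉ S → S.card = k → 0 ∉ S' → S'.card = k →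
      Δ (∑ i ∈ S, x i) = Δ (∑ i ∈ S', x i) := by
  intro x
  have hkpos : 0 < k := by omega
  have hsum : ∀ S : Finset ℕ, 0 ∉ S → S.card = k →
      (∑ i ∈ S, x i) = z 0 + ∑ i ∈ S, z i := by
    intro S h0 hc
    have : (∑ i ∈ S, x i) = S.card * (z 0 / k) + ∑ i ∈ S, z i := by
      simp [x, Finset.sum_add_distrib, mul_comm]
    rw [this, hc, Nat.mul_div_cancel' (hdvd 0)]
  refine ⟨hsum, ?_⟩
  intro S S' h0 hc h0' hc'
  rw [hsum S h0 hc, hsum S' h0' hc']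
  have hne : S.Nonempty := Finset.card_pos.mp (by omega)
  have hne' : S'.Nonempty := Finset.card_pos.mp (by omega)
  have e1 : z 0 + ∑ i ∈ S, z i = ∑ i ∈ insert 0 S, z i :=
    (Finset.sum_insert h0).symm
  have e2 : z 0 + ∑ i ∈ S', z i = ∑ i ∈ insert 0 S', z i :=
    (Finset.sum_insert h0').symm
  rw [e1, e2]
  rw [hmin _ _ (Finset.insert_nonempty _ _) (Finset.insert_nonempty _ _)]
  rw [Finset.min_insert, Finset.min_insert]
  simp
end
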